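/- arXiv:1604.00145 — 6 statements merged into one kernel-verified Lean document; each statement's English description precedes it below -/
import Mathlib

section
/- Let ρ_d = ∑_{i,j=0}^{d-1} ρ_{ij} |i⟩⟨j| be a d-dimensional density matrix and let ρ_{d×d} = ∑_{i,j=0}^{d-1} ρ_{ij} |ii⟩⟨jj| be the associated maximally correlated state on ℂ^d ⊗ ℂ^d. Then the coherence of formation of ρ_d in the reference basis equals the entanglement of formation of ρ_{d×d}: C_f(ρ_d) = E_f(ρ_{d×d}). -/
open Matrix BigOperators Kronecker ComplexOrder

/-- Base-2 Shannon entropy of a probability vector, with the convention `0 · log 0 = 0`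
(automatic since `Real.logb 2 0 = 0`). -/
noncomputable def shannon2 {n : Type*} [Fintype n] (p : n → ℝ) : ℝ :=
  -∑ i, p i * Real.logb 2 (p i)

/-- A density matrix: positive semidefinite with unit trace. -/
def IsDensityMatrix {n : Type*} [Fintype n] (ρ : Matrix n n ℂ) : Prop :=
  ρ.PosSemidef ∧ ρ.trace = 1

/-- Von Neumann entropy (base 2): Shannon entropy of the eigenvalues. -/
noncomputable def vN {n : Type*} [Fintype n] [DecidableEq n] (ρ : Matrix n n ℂ) : ℝ :=
  if h : ρ.IsHermitian then shannon2 h.eigenvalues else 0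

/-- Relative entropy of coherence `C_r(ρ) = S(Δ(ρ)) - S(ρ)`, where `Δ` is the
diagonal part. -/
noncomputable def Cr {n : Type*} [Fintype n] [DecidableEq n] (ρ : Matrix n n ℂ) : ℝ :=
  vN (Matrix.diagonal ρ.diag) - vN ρ

/-- Application of a channel given by its Kraus operators: `ρ ↦ ∑ i, K i * ρ * (K i)ᴴ`. -/
noncomputable def krausApply {ι m p : Type*} [Fintype ι] [Fintype m] [Fintype p]
    (K : ι → Matrix p m ℂ) (ρ : Matrix m m ℂ) : Matrix p p ℂ :=
  ∑ i, K i * ρ * (K i)ᴴ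

/-- Coherence of formation: infimum over finite pure-state decompositions
`ρ = ∑ i, p i • |ψ i⟩⟨ψ i|` of `∑ i, p i * S(Δ(|ψ i⟩⟨ψ i|))`. -/
noncomputable def Cf {n : Type*} [Fintype n] (ρ : Matrix n n ℂ) : ℝ :=
  sInf { x : ℝ | ∃ (m : ℕ) (p : Fin m → ℝ) (ψ : Fin m → n → ℂ),
    (∀ i, 0 < p i) ∧ (∑ i, p i = 1) ∧ (∀ i, ∑ j, ‖ψ i j‖ ^ 2 = 1) ∧
    ρ = ∑ i, (p i : ℂ) • Matrix.vecMulVec (ψ i) (star (ψ i)) ∧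
    x = ∑ i, p i * shannon2 (fun j => ‖ψ i j‖ ^ 2) }

/-- Entanglement of formation of a bipartite state on `ℂ^{dA} ⊗ ℂ^{dB}`: infimum over
finite pure-state decompositions of the average entropy of the reduced state
(partial trace over the first factor). -/
noncomputable def Ef {dA dB : Type*} [Fintype dA] [Fintype dB] [DecidableEq dB]
    (ρ : Matrix (dA × dB) (dA × dB) ℂ) : ℝ :=
  sInf { x : ℝ | ∃ (m : ℕ) (p : Fin m → ℝ) (Ψ : Fin m → (dA × dB) → ℂ),
    (∀ k, 0 < p k) ∧ (∑ k, p k = 1) ∧ (∀ k, ∑ j, ‖Ψ k j‖ ^ 2 = 1) ∧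
    ρ = ∑ k, (p k : ℂ) • Matrix.vecMulVec (Ψ k) (star (Ψ k)) ∧
    x = ∑ k, p k * vN (Matrix.of fun j j' : dB => ∑ i, Ψ k (i, j) * star (Ψ k (i, j'))) }

/-- The maximally correlated state `ρ_{d×d} = ∑_{i,j} ρ_{ij} |ii⟩⟨jj|` associated to `ρ`. -/
def mcState {d : ℕ} (ρ : Matrix (Fin d) (Fin d) ℂ) :
    Matrix (Fin d × Fin d) (Fin d × Fin d) ℂ :=
  Matrix.of fun p q => if p.1 = p.2 ∧ q.1 = q.2 then ρ p.1 q.1 else 0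

/-! Sending `ψ = ∑ ψ_i |i⟩` to `∑ ψ_i |ii⟩` turns pure-state decompositions of `ρ` into
pure-state decompositions of `ρ_{d×d}`, and the reduced state of `∑ ψ_i |ii⟩` is
`diag(|ψ_i|²)`, whose von Neumann entropy is the entropy `S(Δ(|ψ⟩⟨ψ|))` counted by `C_f`.
Conversely, every vector of a decomposition of `ρ_{d×d}` has this form: `ρ_{d×d}` has zero
diagonal entry at `|ij⟩` for `i ≠ j`, so no vector of the decomposition can have weight
there. The two infima therefore run over the same set of values. -/

section Entropy

variable {n : Type*} [Fintype n]

lemma shannon2_eq_of_map_univ_eq {p q : n → ℝ}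
    (h : Finset.univ.val.map p = Finset.univ.val.map q) : shannon2 p = shannon2 q := by
  have hmap (r : n → ℝ) :
      shannon2 r = -((Finset.univ.val.map r).map fun t => t * Real.logb 2 t).sum := by
    rw [Multiset.map_map]; rfl
  rw [hmap, hmap, h]

variable [DecidableEq n]

lemma Matrix.IsHermitian.map_eigenvalues_diagonal_ofReal {r : n → ℝ}
    (hA : (diagonal fun i => (r i : ℂ)).IsHermitian) :
    Finset.univ.val.map hA.eigenvalues = Finset.univ.val.map r := by
  apply Multiset.map_injective Complex.ofReal_injective
  have := hA.roots_charpoly_eq_eigenvalues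
  rw [charpoly_diagonal, Polynomial.roots_prod _ _ (by simp [Finset.prod_ne_zero_iff,
    Polynomial.X_sub_C_ne_zero])] at this
  simpa [Multiset.map_map] using this.symm

lemma vN_diagonal_ofReal (r : n → ℝ) : vN (diagonal fun i => (r i : ℂ)) = shannon2 r := by
  have hA : (diagonal fun i => (r i : ℂ)).IsHermitian := by
    simp [IsHermitian, diagonal_conjTranspose, Pi.star_def]
  rw [vN, dif_pos hA]
  exact shannon2_eq_of_map_univ_eq hA.map_eigenvalues_diagonal_ofReal

end Entropy

lemma apply_eq_zero_of_sum_smul_vecMulVec_apply_self_eq_zero {ι m : Type*} [Fintype ι]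
    {p : ι → ℝ} (hp : ∀ k, 0 < p k) {Ψ : ι → m → ℂ} {a : m}
    (h : (∑ k, (p k : ℂ) • vecMulVec (Ψ k) (star (Ψ k))) a a = 0) (k : ι) : Ψ k a = 0 := by
  have hsum : ∑ k, p k * ‖Ψ k a‖ ^ 2 = 0 := by
    apply Complex.ofReal_injective
    simpa [Matrix.sum_apply, vecMulVec_apply, Complex.mul_conj'] using h
  have hk := (Finset.sum_eq_zero_iff_of_nonneg fun k _ => by positivity [hp k]).mp hsum k
    (Finset.mem_univ k)
  simpa [(hp k).ne'] using hk

section MaximallyCorrelated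

variable {n : Type*} [DecidableEq n]

def mcVec (ψ : n → ℂ) : n × n → ℂ := fun q => if q.1 = q.2 then ψ q.1 else 0

@[simp] lemma mcVec_apply_self (ψ : n → ℂ) (i : n) : mcVec ψ (i, i) = ψ i := if_pos rfl

lemma mcVec_apply_of_ne (ψ : n → ℂ) {i j : n} (h : i ≠ j) : mcVec ψ (i, j) = 0 := if_neg h

lemma sum_norm_sq_mcVec [Fintype n] (ψ : n → ℂ) : ∑ q, ‖mcVec ψ q‖ ^ 2 = ∑ i, ‖ψ i‖ ^ 2 := by
  rw [Fintype.sum_prod_type]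
  refine Finset.sum_congr rfl fun i _ => ?_
  rw [Finset.sum_eq_single i (fun j _ hj => by simp [mcVec_apply_of_ne ψ (Ne.symm hj)])
    (by simp), mcVec_apply_self]

lemma partialTrace_mcVec [Fintype n] (ψ : n → ℂ) :
    (of fun j j' : n => ∑ i, mcVec ψ (i, j) * star (mcVec ψ (i, j'))) =
      diagonal fun j => ((‖ψ j‖ ^ 2 : ℝ) : ℂ) := by
  ext j j'
  rw [of_apply, Finset.sum_eq_single j (fun i _ hi => by simp [mcVec_apply_of_ne ψ hi])
    (by simp), mcVec_apply_self]
  rcases eq_or_ne j j' with rfl | hj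
  · simp [Complex.mul_conj']
  · simp [mcVec_apply_of_ne ψ hj, hj]

lemma eq_mcVec_of_apply_of_ne_eq_zero {Ψ : n × n → ℂ} (h : ∀ i j, i ≠ j → Ψ (i, j) = 0) :
    Ψ = mcVec fun i => Ψ (i, i) := by
  ext ⟨i, j⟩
  rcases eq_or_ne i j with rfl | hij
  · simp
  · rw [h i j hij, mcVec_apply_of_ne _ hij]

end MaximallyCorrelated

section MaximallyCorrelatedState

variable {d : ℕ}

lemma mcState_injective : Function.Injective (mcState (d := d)) := fun ρ σ h => by
  ext i j
  simpa [mcState] using congrFun₂ h (i, i) (j, j)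

lemma mcState_apply_of_ne {ρ : Matrix (Fin d) (Fin d) ℂ} {i j : Fin d} (h : i ≠ j) :
    mcState ρ (i, j) (i, j) = 0 := by
  simp [mcState, h]

lemma mcState_sum_smul_vecMulVec {ι : Type*} [Fintype ι] (p : ι → ℝ) (ψ : ι → Fin d → ℂ) :
    mcState (∑ k, (p k : ℂ) • vecMulVec (ψ k) (star (ψ k))) =
      ∑ k, (p k : ℂ) • vecMulVec (mcVec (ψ k)) (star (mcVec (ψ k))) := by
  ext ⟨i, j⟩ ⟨i', j'⟩
  simp only [mcState, mcVec, of_apply, Matrix.sum_apply, Matrix.smul_apply, vecMulVec_apply,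
    Pi.star_apply]
  split_ifs <;> simp_all

end MaximallyCorrelatedState

theorem Cf_eq_Ef_mcState_general (d : ℕ)
    (ρ : Matrix (Fin d) (Fin d) ℂ) :
    Cf ρ = Ef (mcState ρ) := by
  unfold Cf Ef
  congr 1
  ext x
  constructor
  · rintro ⟨m, p, ψ, hp, hp1, hψ, rfl, rfl⟩
    refine ⟨m, p, fun k => mcVec (ψ k), hp, hp1, fun k => (sum_norm_sq_mcVec _).trans (hψ k),
      mcState_sum_smul_vecMulVec p ψ, ?_⟩
    simp only [partialTrace_mcVec, vN_diagonal_ofReal]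
  · rintro ⟨m, p, Ψ, hp, hp1, hΨ, hdec, rfl⟩
    obtain ⟨ψ, rfl⟩ : ∃ ψ : Fin m → Fin d → ℂ, Ψ = fun k => mcVec (ψ k) :=
      ⟨_, funext fun k => eq_mcVec_of_apply_of_ne_eq_zero fun i j hij =>
        apply_eq_zero_of_sum_smul_vecMulVec_apply_self_eq_zero hp
          (hdec ▸ mcState_apply_of_ne hij) k⟩
    refine ⟨m, p, ψ, hp, hp1, fun k => (sum_norm_sq_mcVec _).symm.trans (hΨ k),
      mcState_injective (hdec.trans (mcState_sum_smul_vecMulVec p ψ).symm), ?_⟩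
    simp only [partialTrace_mcVec, vN_diagonal_ofReal]

/-- **Lemma 1.** The coherence of formation of `ρ_d` equals the entanglement of formation
of the associated maximally correlated state `ρ_{d×d}`. -/
theorem Cf_eq_Ef_mcState (d : ℕ)
    (ρ : Matrix (Fin d) (Fin d) ℂ) (hρ : IsDensityMatrix ρ) :
    Cf ρ = Ef (mcState ρ) :=
  Cf_eq_Ef_mcState_general d ρ
end

section
/- For every 2×2 density matrix ρ₂, the coherence of formation is given by the closed formula C_f(ρ₂) = h((1 + √(1 - C_{l1}(ρ₂)²))/2), where C_{l1}(ρ₂) = 2|⟨0|ρ₂|1⟩| is the l₁-norm of coherence. -/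
open Matrix BigOperators Kronecker ComplexOrder

/-- l₁-norm of coherence: sum of the absolute values of the off-diagonal entries. -/
noncomputable def Cl1 {n : Type*} [Fintype n] [DecidableEq n] (ρ : Matrix n n ℂ) : ℝ :=
  ∑ i, ∑ j, if i ≠ j then ‖ρ i j‖ else 0

/-- Binary entropy function (base 2). -/
noncomputable def binEnt (x : ℝ) : ℝ :=
  -x * Real.logb 2 x - (1 - x) * Real.logb 2 (1 - x)

/-!
Write `qubitCf c = h((1 + √(1 - c²)) / 2)`. For a pure qubit state `ψ` the entropy of the diagonal
is `h(|ψ₀|²) = qubitCf (2|ψ₀||ψ₁|)`, and `2|ψ₀||ψ₁|` is its l₁-coherence. Since `qubitCf` is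
convex and nondecreasing on `[0, 1]` (its second derivative has the sign of `artanh u - u` with
`u = √(1 - c²)`) and `C_{l1}` is convex, Jensen's inequality bounds the average over any pure-state
decomposition of `ρ` from below by `qubitCf (C_{l1} ρ)`. Conversely, `ρ` is a mixture of two pure
states that both have l₁-coherence `C_{l1} ρ`, so the bound is attained.
-/

open Real Set ComplexConjugate

lemma binEnt_eq_binEntropy_div_log_two (x : ℝ) : binEnt x = binEntropy x / log 2 := by
  unfold binEnt binEntropy logb
  rw [log_inv, log_inv]
  ring

lemma binEnt_one_sub (x : ℝ) : binEnt (1 - x) = binEnt x := by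
  unfold binEnt; ring_nf

lemma shannon2_fin_two {p : Fin 2 → ℝ} (h : p 0 + p 1 = 1) : shannon2 p = binEnt (p 0) := by
  rw [shannon2, Fin.sum_univ_two, binEnt, ← h]
  ring_nf

lemma two_mul_le_log_one_add_sub_log_one_sub {u : ℝ} (h₀ : 0 ≤ u) (h₁ : u < 1) :
    2 * u ≤ log (1 + u) - log (1 - u) := by
  have hs := hasSum_log_sub_log_of_abs_lt_one (abs_lt.2 ⟨by linarith, h₁⟩)
  simpa using le_hasSum hs 0 (fun k _ => by positivity)

lemma hasDerivAt_sqrt_one_sub_sq {s : ℝ} (h : s ^ 2 < 1) :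
    HasDerivAt (fun s => √(1 - s ^ 2)) (-s / √(1 - s ^ 2)) s := by
  have := ((hasDerivAt_pow 2 s).const_sub 1).sqrt (by linarith)
  convert this using 1
  norm_num
  ring

lemma hasDerivAt_log_one_add_sub_log_one_sub {u : ℝ} (h₀ : -1 < u) (h₁ : u < 1) :
    HasDerivAt (fun u => log (1 + u) - log (1 - u)) (2 / (1 - u ^ 2)) u := by
  have hplus : HasDerivAt (fun u => log (1 + u)) (1 / (1 + u)) u :=
    ((hasDerivAt_id' u).const_add 1).log (by linarith)
  have hminus : HasDerivAt (fun u => log (1 - u)) (-1 / (1 - u)) u :=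
    ((hasDerivAt_id' u).const_sub 1).log (by linarith)
  refine (hplus.sub hminus).congr_deriv ?_
  have : 1 + u ≠ 0 := by linarith
  have : 1 - u ≠ 0 := by linarith
  have : 1 - u ^ 2 ≠ 0 := by nlinarith
  field_simp
  ring

lemma sqrt_one_sub_sq_mem_Ioo {s : ℝ} (hs : s ∈ Ioo 0 1) : √(1 - s ^ 2) ∈ Ioo 0 1 := by
  obtain ⟨h₀, h₁⟩ := hs
  exact ⟨sqrt_pos.2 (by nlinarith), (sqrt_lt' one_pos).2 (by nlinarith)⟩

noncomputable def qubitCf (c : ℝ) : ℝ := binEnt ((1 + √(1 - c ^ 2)) / 2)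

noncomputable def qubitCfDeriv (s : ℝ) : ℝ :=
  s * (log (1 + √(1 - s ^ 2)) - log (1 - √(1 - s ^ 2))) / (2 * √(1 - s ^ 2) * log 2)

noncomputable def qubitCfDeriv2 (s : ℝ) : ℝ :=
  (log (1 + √(1 - s ^ 2)) - log (1 - √(1 - s ^ 2)) - 2 * √(1 - s ^ 2)) /
    (2 * √(1 - s ^ 2) ^ 3 * log 2)

lemma continuous_qubitCf : Continuous qubitCf := by
  unfold qubitCf
  simp only [binEnt_eq_binEntropy_div_log_two]
  have := binEntropy_continuous
  fun_prop

lemma hasDerivAt_qubitCf {s : ℝ} (hs : s ∈ Ioo 0 1) : HasDerivAt qubitCf (qubitCfDeriv s) s := by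
  obtain ⟨hu₀, hu₁⟩ := sqrt_one_sub_sq_mem_Ioo hs
  have hu := hasDerivAt_sqrt_one_sub_sq (s := s) (by nlinarith [hs.1, hs.2])
  have hb := hasDerivAt_binEntropy (p := (1 + √(1 - s ^ 2)) / 2) (by positivity) (by linarith)
  have hf : qubitCf = fun c => binEntropy ((1 + √(1 - c ^ 2)) / 2) / log 2 :=
    funext fun _ => binEnt_eq_binEntropy_div_log_two _
  rw [hf]
  refine ((hb.comp s ((hu.const_add 1).div_const 2)).div_const (log 2)).congr_deriv ?_
  rw [qubitCfDeriv, show 1 - (1 + √(1 - s ^ 2)) / 2 = (1 - √(1 - s ^ 2)) / 2 by ring,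
    log_div (by linarith) two_ne_zero, log_div (by linarith) two_ne_zero]
  field_simp
  ring

lemma hasDerivAt_qubitCfDeriv {s : ℝ} (hs : s ∈ Ioo 0 1) :
    HasDerivAt qubitCfDeriv (qubitCfDeriv2 s) s := by
  obtain ⟨hu₀, hu₁⟩ := sqrt_one_sub_sq_mem_Ioo hs
  have hu := hasDerivAt_sqrt_one_sub_sq (s := s) (by nlinarith [hs.1, hs.2])
  have hL := (hasDerivAt_log_one_add_sub_log_one_sub (by linarith) hu₁).comp s hu
  have hden := (hu.const_mul 2).mul_const (log 2)
  refine (((hasDerivAt_id' s).mul hL).div hden (by positivity)).congr_deriv ?_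
  have hu2 : √(1 - s ^ 2) ^ 2 = 1 - s ^ 2 := sq_sqrt (by nlinarith [hs.1, hs.2])
  have hs2 : 1 - √(1 - s ^ 2) ^ 2 = s ^ 2 := by linarith
  rw [qubitCfDeriv2, hs2]
  simp only [Function.comp_apply, Pi.mul_apply]
  have := hs.1.ne'
  field_simp
  linear_combination (log (1 + √(1 - s ^ 2)) - log (1 - √(1 - s ^ 2))) * hu2

lemma qubitCfDeriv_nonneg {s : ℝ} (hs : s ∈ Ioo 0 1) : 0 ≤ qubitCfDeriv s := by
  obtain ⟨hu₀, hu₁⟩ := sqrt_one_sub_sq_mem_Ioo hs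
  have := two_mul_le_log_one_add_sub_log_one_sub hu₀.le hu₁
  have := hs.1
  have : 0 < log 2 := log_pos one_lt_two
  have : 0 ≤ log (1 + √(1 - s ^ 2)) - log (1 - √(1 - s ^ 2)) := by linarith
  unfold qubitCfDeriv
  positivity

lemma qubitCfDeriv2_nonneg {s : ℝ} (hs : s ∈ Ioo 0 1) : 0 ≤ qubitCfDeriv2 s := by
  obtain ⟨hu₀, hu₁⟩ := sqrt_one_sub_sq_mem_Ioo hs
  have := two_mul_le_log_one_add_sub_log_one_sub hu₀.le hu₁
  have : 0 < log 2 := log_pos one_lt_two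
  have : 0 ≤ log (1 + √(1 - s ^ 2)) - log (1 - √(1 - s ^ 2)) - 2 * √(1 - s ^ 2) := by linarith
  unfold qubitCfDeriv2
  positivity

lemma convexOn_qubitCf : ConvexOn ℝ (Icc 0 1) qubitCf := by
  refine convexOn_of_hasDerivWithinAt2_nonneg (convex_Icc 0 1) continuous_qubitCf.continuousOn
    (f' := qubitCfDeriv) (f'' := qubitCfDeriv2) ?_ ?_ ?_ <;> rw [interior_Icc] <;> intro s hs
  · exact (hasDerivAt_qubitCf hs).hasDerivWithinAt
  · exact (hasDerivAt_qubitCfDeriv hs).hasDerivWithinAt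
  · exact qubitCfDeriv2_nonneg hs

lemma monotoneOn_qubitCf : MonotoneOn qubitCf (Icc 0 1) := by
  refine monotoneOn_of_hasDerivWithinAt_nonneg (convex_Icc 0 1) continuous_qubitCf.continuousOn
    (f' := qubitCfDeriv) ?_ ?_ <;> rw [interior_Icc] <;> intro s hs
  · exact (hasDerivAt_qubitCf hs).hasDerivWithinAt
  · exact qubitCfDeriv_nonneg hs

lemma qubitCf_two_mul_mul {a b : ℝ} (h : a ^ 2 + b ^ 2 = 1) :
    qubitCf (2 * (a * b)) = binEnt (a ^ 2) := by
  have : 1 - (2 * (a * b)) ^ 2 = (a ^ 2 - b ^ 2) ^ 2 := by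
    linear_combination (-(a ^ 2 + b ^ 2) - 1) * h
  rw [qubitCf, this, sqrt_sq_eq_abs]
  rcases abs_cases (a ^ 2 - b ^ 2) with ⟨he, _⟩ | ⟨he, _⟩ <;> rw [he]
  · congr 1; linarith
  · rw [← binEnt_one_sub]; congr 1; linarith

section Cl1

variable {n : Type*} [Fintype n] [DecidableEq n]

lemma Cl1_nonneg (ρ : Matrix n n ℂ) : 0 ≤ Cl1 ρ := by
  unfold Cl1
  positivity

lemma Cl1_sum_smul_le {ι : Type*} [Fintype ι] (p : ι → ℝ) (hp : ∀ i, 0 ≤ p i)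
    (M : ι → Matrix n n ℂ) : Cl1 (∑ i, (p i : ℂ) • M i) ≤ ∑ i, p i * Cl1 (M i) := by
  calc Cl1 (∑ i, (p i : ℂ) • M i)
      ≤ ∑ j, ∑ k, ∑ i, p i * (if j ≠ k then ‖M i j k‖ else 0) := by
        refine Finset.sum_le_sum fun j _ => Finset.sum_le_sum fun k _ => ?_
        split_ifs
        · simp only [Matrix.sum_apply, Matrix.smul_apply, smul_eq_mul]
          refine (norm_sum_le _ _).trans (le_of_eq ?_)
          simp [abs_of_nonneg (hp _)]
        · simp
    _ = ∑ i, p i * Cl1 (M i) := by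
        simp only [Cl1, Finset.mul_sum]
        exact (Finset.sum_congr rfl fun _ _ => Finset.sum_comm).trans Finset.sum_comm

end Cl1

lemma Cl1_fin_two (ρ : Matrix (Fin 2) (Fin 2) ℂ) : Cl1 ρ = ‖ρ 0 1‖ + ‖ρ 1 0‖ := by
  simp [Cl1, Fin.sum_univ_two]

lemma Cl1_vecMulVec_star (ψ : Fin 2 → ℂ) :
    Cl1 (vecMulVec ψ (star ψ)) = 2 * (‖ψ 0‖ * ‖ψ 1‖) := by
  simp [Cl1_fin_two, vecMulVec_apply]
  ring

lemma Cl1_vecMulVec_star_mem_Icc {ψ : Fin 2 → ℂ} (h : ∑ j, ‖ψ j‖ ^ 2 = 1) :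
    Cl1 (vecMulVec ψ (star ψ)) ∈ Icc 0 1 := by
  rw [Fin.sum_univ_two] at h
  rw [Cl1_vecMulVec_star]
  exact ⟨by positivity, by nlinarith [sq_nonneg (‖ψ 0‖ - ‖ψ 1‖)]⟩

lemma shannon2_eq_qubitCf (ψ : Fin 2 → ℂ) (h : ∑ j, ‖ψ j‖ ^ 2 = 1) :
    shannon2 (fun j => ‖ψ j‖ ^ 2) = qubitCf (Cl1 (vecMulVec ψ (star ψ))) := by
  rw [Fin.sum_univ_two] at h
  rw [shannon2_fin_two h, Cl1_vecMulVec_star, qubitCf_two_mul_mul h]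

section Decompositions

variable {n : Type*} [Fintype n]

noncomputable def decompositionCosts (ρ : Matrix n n ℂ) : Set ℝ :=
  { x : ℝ | ∃ (m : ℕ) (p : Fin m → ℝ) (ψ : Fin m → n → ℂ),
    (∀ i, 0 < p i) ∧ (∑ i, p i = 1) ∧ (∀ i, ∑ j, ‖ψ i j‖ ^ 2 = 1) ∧
    ρ = ∑ i, (p i : ℂ) • Matrix.vecMulVec (ψ i) (star (ψ i)) ∧
    x = ∑ i, p i * shannon2 (fun j => ‖ψ i j‖ ^ 2) }

lemma Cf_eq_sInf_decompositionCosts (ρ : Matrix n n ℂ) : Cf ρ = sInf (decompositionCosts ρ) :=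
  rfl

lemma mem_decompositionCosts_of_eq_mix {ρ : Matrix n n ℂ} {p v : ℝ} (hp : p ∈ Icc 0 1)
    {φ χ : n → ℂ} (hφ : ∑ j, ‖φ j‖ ^ 2 = 1) (hχ : ∑ j, ‖χ j‖ ^ 2 = 1)
    (hρ : ρ = (p : ℂ) • vecMulVec φ (star φ) + ((1 - p : ℝ) : ℂ) • vecMulVec χ (star χ))
    (hvφ : shannon2 (fun j => ‖φ j‖ ^ 2) = v) (hvχ : shannon2 (fun j => ‖χ j‖ ^ 2) = v) :
    v ∈ decompositionCosts ρ := by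
  rcases hp.1.eq_or_lt with rfl | hp₀
  · refine ⟨1, ![1], ![χ], by simp, by simp, by simpa using hχ, by simpa using hρ, by simp [hvχ]⟩
  rcases hp.2.eq_or_lt with rfl | hp₁
  · refine ⟨1, ![1], ![φ], by simp, by simp, by simpa using hφ, by simpa using hρ, by simp [hvφ]⟩
  refine ⟨2, ![p, 1 - p], ![φ, χ], ?_, by simp, ?_, by rw [hρ, Fin.sum_univ_two]; rfl,
    by simp [hvφ, hvχ]; ring⟩
  · intro i; fin_cases i <;> simp [hp₀, hp₁]
  · intro i; fin_cases i <;> simpa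

end Decompositions

lemma qubitCf_Cl1_le_sum {ι : Type*} [Fintype ι] {p : ι → ℝ} {ψ : ι → Fin 2 → ℂ}
    (hp : ∀ i, 0 ≤ p i) (hsum : ∑ i, p i = 1) (hψ : ∀ i, ∑ j, ‖ψ i j‖ ^ 2 = 1) :
    qubitCf (Cl1 (∑ i, (p i : ℂ) • vecMulVec (ψ i) (star (ψ i)))) ≤
      ∑ i, p i * shannon2 (fun j => ‖ψ i j‖ ^ 2) := by
  set s := fun i => Cl1 (vecMulVec (ψ i) (star (ψ i)))
  have hs : ∀ i ∈ Finset.univ, s i ∈ Icc 0 1 := fun i _ => Cl1_vecMulVec_star_mem_Icc (hψ i)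
  have hmix : ∑ i, p i • s i ∈ Icc 0 1 := (convex_Icc 0 1).sum_mem (fun i _ => hp i) hsum hs
  have hle : Cl1 (∑ i, (p i : ℂ) • vecMulVec (ψ i) (star (ψ i))) ≤ ∑ i, p i • s i :=
    Cl1_sum_smul_le p hp _
  calc qubitCf (Cl1 (∑ i, (p i : ℂ) • vecMulVec (ψ i) (star (ψ i))))
      ≤ qubitCf (∑ i, p i • s i) :=
        monotoneOn_qubitCf ⟨Cl1_nonneg _, hle.trans hmix.2⟩ hmix hle
    _ ≤ ∑ i, p i • qubitCf (s i) := convexOn_qubitCf.map_sum_le (fun i _ => hp i) hsum hs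
    _ = ∑ i, p i * shannon2 (fun j => ‖ψ i j‖ ^ 2) := by
        simp only [smul_eq_mul, s, shannon2_eq_qubitCf _ (hψ _)]

lemma Matrix.PosSemidef.norm_sq_apply_zero_one_le {ρ : Matrix (Fin 2) (Fin 2) ℂ}
    (hρ : ρ.PosSemidef) : ‖ρ 0 1‖ ^ 2 ≤ (ρ 0 0).re * (ρ 1 1).re := by
  have h00 : ρ 0 0 = ((ρ 0 0).re : ℂ) := (hρ.1.coe_re_apply_self 0).symm
  have h11 : ρ 1 1 = ((ρ 1 1).re : ℂ) := (hρ.1.coe_re_apply_self 1).symm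
  have hdet := hρ.det_nonneg
  rw [det_fin_two, ← hρ.1.apply 1 0, Complex.star_def, Complex.mul_conj,
    Complex.normSq_eq_norm_sq, h00, h11] at hdet
  exact_mod_cast sub_nonneg.1 hdet

lemma eq_smul_vecMulVec_add_smul_vecMulVec (ρ : Matrix (Fin 2) (Fin 2) ℂ)
    (h10 : ρ 1 0 = conj (ρ 0 1)) {p x : ℝ} (hx : x ≠ 0)
    (h00 : ρ 0 0 = ((p * x ^ 2 + (1 - p) * (‖ρ 0 1‖ / x) ^ 2 : ℝ) : ℂ))
    (h11 : ρ 1 1 = ((p * (‖ρ 0 1‖ / x) ^ 2 + (1 - p) * x ^ 2 : ℝ) : ℂ)) :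
    ρ = (p : ℂ) • vecMulVec ![(x : ℂ), conj (ρ 0 1) / x] (star ![(x : ℂ), conj (ρ 0 1) / x]) +
      ((1 - p : ℝ) : ℂ) • vecMulVec ![ρ 0 1 / x, (x : ℂ)] (star ![ρ 0 1 / x, (x : ℂ)]) := by
  have hβ : (‖ρ 0 1‖ ^ 2 : ℂ) = ρ 0 1 * conj (ρ 0 1) := by
    rw [Complex.mul_conj, Complex.normSq_eq_norm_sq]; push_cast; rfl
  have hxC : (x : ℂ) ≠ 0 := Complex.ofReal_ne_zero.2 hx
  ext i j
  fin_cases i <;> fin_cases j <;>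
    simp only [Fin.zero_eta, Fin.mk_one, Matrix.add_apply, Matrix.smul_apply, vecMulVec_apply,
      Pi.star_apply, cons_val_zero, cons_val_one, smul_eq_mul, star_div₀, Complex.star_def,
      Complex.conj_conj, Complex.conj_ofReal, h00, h11, h10] <;> push_cast <;> field_simp
  · linear_combination (1 - (p : ℂ)) * hβ
  · ring
  · ring
  · linear_combination (p : ℂ) * hβ

lemma qubitCf_Cl1_mem_decompositionCosts {ρ : Matrix (Fin 2) (Fin 2) ℂ}
    (hρ : IsDensityMatrix ρ) : qubitCf (Cl1 ρ) ∈ decompositionCosts ρ := by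
  obtain ⟨hpsd, htr⟩ := hρ
  set a := (ρ 0 0).re
  set β := ρ 0 1
  have h00 : ρ 0 0 = a := (hpsd.1.coe_re_apply_self 0).symm
  have h11 : ρ 1 1 = ((1 - a : ℝ) : ℂ) := by
    rw [trace_fin_two, h00] at htr
    push_cast
    linear_combination htr
  have h10 : ρ 1 0 = conj β := (hpsd.1.apply 1 0).symm
  have hβ : ‖β‖ ^ 2 ≤ a * (1 - a) := by
    simpa [h11] using hpsd.norm_sq_apply_zero_one_le
  have hCl1 : Cl1 ρ = 2 * ‖β‖ := by
    rw [Cl1_fin_two, h10, Complex.norm_conj]; ring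
  -- `ρ = p φφ* + (1 - p) χχ*` where `φ = (x, β̄/x)` and `χ = (β/x, x)` both have l₁-coherence
  -- `2‖β‖`; `x² = (1 + t)/2` makes them unit vectors, and `p` matches the diagonal of `ρ`.
  set t := √(1 - (2 * ‖β‖) ^ 2)
  have ht : |2 * a - 1| ≤ t := abs_le_sqrt (by nlinarith)
  obtain ⟨ht₁, ht₂⟩ := abs_le.1 ht
  have ht2 : t ^ 2 = 1 - (2 * ‖β‖) ^ 2 := sq_sqrt (by nlinarith [sq_nonneg (2 * a - 1)])
  set x := √((1 + t) / 2)
  have hx2 : x ^ 2 = (1 + t) / 2 := sq_sqrt (by linarith)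
  have hx : 0 < x := sqrt_pos.2 (by linarith)
  have hβx : (‖β‖ / x) ^ 2 = (1 - t) / 2 := by
    rw [div_pow, div_eq_iff (by positivity), hx2]
    nlinarith
  -- for `t = 0` the junk value `p = 0` still works, since then `a = 1/2`
  set p := (2 * a - 1 + t) / (2 * t)
  have hpt : p * t = (2 * a - 1 + t) / 2 := by
    rcases eq_or_ne t 0 with h | h
    · simp [p, h]; linarith
    · simp only [p]
      field_simp
  have hp : p ∈ Icc 0 1 :=
    ⟨div_nonneg (by linarith) (by positivity), div_le_one_of_le₀ (by linarith) (by positivity)⟩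
  have hφ0 : ‖(x : ℂ)‖ = x := by simp [abs_of_pos hx]
  have hφ1 : ‖conj β / x‖ = ‖β‖ / x := by simp [abs_of_pos hx]
  have hχ0 : ‖β / x‖ = ‖β‖ / x := by simp [abs_of_pos hx]
  have hφ : ∑ j, ‖![(x : ℂ), conj β / x] j‖ ^ 2 = 1 := by
    simp only [Fin.sum_univ_two, cons_val_zero, cons_val_one, hφ0, hφ1, hx2, hβx]; ring
  have hχ : ∑ j, ‖![β / x, (x : ℂ)] j‖ ^ 2 = 1 := by
    simp only [Fin.sum_univ_two, cons_val_zero, cons_val_one, hφ0, hχ0, hx2, hβx]; ring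
  refine mem_decompositionCosts_of_eq_mix hp hφ hχ
    (eq_smul_vecMulVec_add_smul_vecMulVec ρ h10 hx.ne' ?_ ?_) ?_ ?_
  · rw [h00, hx2, hβx]; congr 1; linear_combination -hpt
  · rw [h11, hx2, hβx]; congr 1; linear_combination hpt
  · rw [shannon2_eq_qubitCf _ hφ, Cl1_vecMulVec_star, hCl1]
    simp only [cons_val_zero, cons_val_one, hφ0, hφ1]
    field_simp
  · rw [shannon2_eq_qubitCf _ hχ, Cl1_vecMulVec_star, hCl1]
    simp only [cons_val_zero, cons_val_one, hφ0, hχ0]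
    field_simp

/-- **Lemma 2.** Closed formula for the coherence of formation of a qubit state:
`C_f(ρ₂) = h((1 + √(1 - C_{l₁}(ρ₂)²))/2)`. -/
theorem Cf_qubit_closed_formula (ρ : Matrix (Fin 2) (Fin 2) ℂ)
    (hρ : IsDensityMatrix ρ) :
    Cf ρ = binEnt ((1 + Real.sqrt (1 - Cl1 ρ ^ 2)) / 2) := by
  have hleast : IsLeast (decompositionCosts ρ) (qubitCf (Cl1 ρ)) := by
    refine ⟨qubitCf_Cl1_mem_decompositionCosts hρ, ?_⟩
    rintro _ ⟨m, p, ψ, hp, hsum, hψ, rfl, rfl⟩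
    exact qubitCf_Cl1_le_sum (fun i => (hp i).le) hsum hψ
  rw [Cf_eq_sInf_decompositionCosts, hleast.csInf_eq, qubitCf]
end

section
/- Let Λ be a non-coherence-generating qubit channel (a channel on 2×2 density matrices mapping every diagonal density matrix to a diagonal matrix). Then for every 2×2 density matrix ρ₂, the coherence of formation satisfies C_f(Λ(ρ₂)) ≤ C_f(ρ₂). -/
/-!
Write `ρ = ∑ pᵢ |ψᵢ⟩⟨ψᵢ|`. Since `Λ` maps diagonal matrices to diagonal ones, the
off-diagonal entry of `Λ(|ψ⟩⟨ψ|)` only depends on `ψ₀ ψ̄₁`; feeding `Λ` a balanced vector with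
the same off-diagonal entry and using positivity of the output gives
`|Λ(|ψ⟩⟨ψ|)₀₁| ≤ |ψ₀| |ψ₁|`. Every qubit state `σ` is a mixture of two pure states `χ` with
`|χ₀| |χ₁| = |σ₀₁|`, and for unit vectors of `ℂ²` the entropy of `(|χ₀|², |χ₁|²)` increases with
`|χ₀| |χ₁|`. Splitting every `Λ(|ψᵢ⟩⟨ψᵢ|)` in this way yields a decomposition of `Λ(ρ)` whose
average entropy is at most that of the given decomposition of `ρ`.
-/

open Matrix BigOperators Kronecker ComplexOrder

open Real

lemma Real.binEntropy_le_of_mul_one_sub_le {s t : ℝ} (hs : s ∈ Set.Icc 0 1)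
    (ht : t ∈ Set.Icc 0 1) (h : t * (1 - t) ≤ s * (1 - s)) : binEntropy t ≤ binEntropy s := by
  have fold : ∀ p ∈ Set.Icc (0 : ℝ) 1, binEntropy p = binEntropy ((1 + |2 * p - 1|) / 2) ∧
      (1 + |2 * p - 1|) / 2 ∈ Set.Icc 2⁻¹ 1 := by
    rintro p ⟨hp0, hp1⟩
    rcases abs_cases (2 * p - 1) with ⟨hp, hsgn⟩ | ⟨hp, hsgn⟩ <;> rw [hp]
    · exact ⟨by ring_nf, by constructor <;> linarith⟩
    · exact ⟨by rw [← binEntropy_one_sub]; ring_nf, by constructor <;> linarith⟩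
  obtain ⟨hs', hsI⟩ := fold s hs
  obtain ⟨ht', htI⟩ := fold t ht
  rw [hs', ht']
  refine binEntropy_strictAntiOn.antitoneOn hsI htI ?_
  have := sq_le_sq.1 (show (2 * s - 1) ^ 2 ≤ (2 * t - 1) ^ 2 by nlinarith)
  linarith

lemma shannon2_nonneg {n : Type*} [Fintype n] {f : n → ℝ} (h0 : ∀ i, 0 ≤ f i)
    (h1 : ∀ i, f i ≤ 1) : 0 ≤ shannon2 f :=
  neg_nonneg.2 <| Finset.sum_nonpos fun i _ =>
    mul_nonpos_of_nonneg_of_nonpos (h0 i) (logb_nonpos one_lt_two (h0 i) (h1 i))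

lemma shannon2_normSq_fin_two {ψ : Fin 2 → ℂ} (hψ : ∑ j, ‖ψ j‖ ^ 2 = 1) :
    shannon2 (fun j => ‖ψ j‖ ^ 2) = binEntropy (‖ψ 0‖ ^ 2) / log 2 := by
  rw [Fin.sum_univ_two] at hψ
  simp only [shannon2, Fin.sum_univ_two, binEntropy, logb, log_inv, ← hψ]
  ring_nf

lemma shannon2_normSq_le_of_norm_mul_le {χ ψ : Fin 2 → ℂ} (hχ : ∑ j, ‖χ j‖ ^ 2 = 1)
    (hψ : ∑ j, ‖ψ j‖ ^ 2 = 1) (h : ‖χ 0‖ * ‖χ 1‖ ≤ ‖ψ 0‖ * ‖ψ 1‖) :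
    shannon2 (fun j => ‖χ j‖ ^ 2) ≤ shannon2 (fun j => ‖ψ j‖ ^ 2) := by
  rw [shannon2_normSq_fin_two hχ, shannon2_normSq_fin_two hψ]
  gcongr
  rw [Fin.sum_univ_two] at hχ hψ
  refine binEntropy_le_of_mul_one_sub_le ⟨by positivity, by linarith [sq_nonneg ‖ψ 1‖]⟩
    ⟨by positivity, by linarith [sq_nonneg ‖χ 1‖]⟩ ?_
  rw [← eq_sub_of_add_eq' hχ, ← eq_sub_of_add_eq' hψ, ← mul_pow, ← mul_pow]
  gcongr

lemma Matrix.PosSemidef.norm_apply_zero_one_sq_le {A : Matrix (Fin 2) (Fin 2) ℂ}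
    (hA : A.PosSemidef) : ‖A 0 1‖ ^ 2 ≤ (A 0 0).re * (A 1 1).re := by
  have hdet := hA.det_nonneg
  rw [det_fin_two, ← hA.1.apply 1 0, ← hA.1.coe_re_apply_self 0, ← hA.1.coe_re_apply_self 1,
    RCLike.star_def, Complex.mul_conj', RCLike.re_to_complex, RCLike.re_to_complex] at hdet
  have hle : ((‖A 0 1‖ ^ 2 : ℝ) : ℂ) ≤ (((A 0 0).re * (A 1 1).re : ℝ) : ℂ) := by
    push_cast
    exact sub_nonneg.1 hdet
  exact Complex.real_le_real.1 hle

lemma trace_vecMulVec_star {n : Type*} [Fintype n] (ψ : n → ℂ) :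
    (vecMulVec ψ (star ψ)).trace = ((∑ j, ‖ψ j‖ ^ 2 : ℝ) : ℂ) := by
  simp [trace_vecMulVec, dotProduct, Complex.mul_conj']

lemma isDensityMatrix_vecMulVec {n : Type*} [Fintype n] {ψ : n → ℂ}
    (hψ : ∑ j, ‖ψ j‖ ^ 2 = 1) : IsDensityMatrix (vecMulVec ψ (star ψ)) :=
  ⟨posSemidef_vecMulVec_self_star ψ, by rw [trace_vecMulVec_star, hψ, Complex.ofReal_one]⟩

section Kraus

variable {ι m p : Type*} [Fintype ι] [Fintype m] [Fintype p] (K : ι → Matrix p m ℂ)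

noncomputable def krausApplyₗ : Matrix m m ℂ →ₗ[ℂ] Matrix p p ℂ where
  toFun := krausApply K
  map_add' M N := by simp only [krausApply, Matrix.mul_add, Matrix.add_mul, Finset.sum_add_distrib]
  map_smul' c M := by simp only [krausApply, Matrix.mul_smul, Matrix.smul_mul, Finset.smul_sum,
    RingHom.id_apply]

lemma krausApplyₗ_apply (M : Matrix m m ℂ) : krausApplyₗ K M = krausApply K M := rfl

variable {K}

lemma trace_krausApply [DecidableEq m] (hK : ∑ i, (K i)ᴴ * K i = 1) (M : Matrix m m ℂ) :
    (krausApply K M).trace = M.trace := by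
  simp_rw [krausApply, trace_sum, trace_mul_cycle _ M]
  rw [← trace_sum, ← Finset.sum_mul, hK, Matrix.one_mul]

lemma Matrix.PosSemidef.krausApply {M : Matrix m m ℂ} (hM : M.PosSemidef) :
    (krausApply K M).PosSemidef :=
  posSemidef_sum _ fun i _ => hM.mul_mul_conjTranspose_same (K i)

lemma IsDensityMatrix.krausApply [DecidableEq m] (hK : ∑ i, (K i)ᴴ * K i = 1)
    {M : Matrix m m ℂ} (hM : IsDensityMatrix M) : IsDensityMatrix (krausApply K M) :=
  ⟨hM.1.krausApply, by rw [trace_krausApply hK, hM.2]⟩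

end Kraus

def IsNonCoherenceGenerating {ι n : Type*} [Fintype ι] [Fintype n] (K : ι → Matrix n n ℂ) :
    Prop :=
  ∀ σ : Matrix n n ℂ, IsDensityMatrix σ → σ.IsDiag → (krausApply K σ).IsDiag

namespace IsNonCoherenceGenerating

variable {ι n : Type*} [Fintype ι] [Fintype n] [DecidableEq n] {K : ι → Matrix n n ℂ}

lemma isDiag_krausApply (hK : IsNonCoherenceGenerating K) {M : Matrix n n ℂ} (hM : M.IsDiag) :
    (krausApply K M).IsDiag := by
  have hsum : M = ∑ k, M k k • diagonal (Pi.single k 1) := by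
    ext i j
    by_cases hij : i = j
    · subst hij
      simp [Matrix.sum_apply, Pi.single_apply]
    · simp [Matrix.sum_apply, hij, hM hij]
  have hE : ∀ k : n, IsDensityMatrix (diagonal (Pi.single k (1 : ℂ))) := fun k =>
    ⟨posSemidef_diagonal_iff.2 (Pi.single_nonneg.2 zero_le_one), by simp [trace_diagonal]⟩
  rw [hsum, ← krausApplyₗ_apply, map_sum]
  exact Finset.sum_induction _ IsDiag (fun _ _ => IsDiag.add) isDiag_zero fun k _ => by
    rw [map_smul]
    exact (hK _ (hE k) (isDiag_diagonal _)).smul _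

lemma krausApply_apply_eq_of_isDiag_sub (hK : IsNonCoherenceGenerating K) {M M' : Matrix n n ℂ}
    (hMM' : (M - M').IsDiag) {i j : n} (hij : i ≠ j) :
    krausApply K M i j = krausApply K M' i j := by
  have h := hK.isDiag_krausApply hMM' hij
  rwa [← krausApplyₗ_apply, map_sub, Matrix.sub_apply, sub_eq_zero] at h

end IsNonCoherenceGenerating

lemma IsNonCoherenceGenerating.norm_krausApply_vecMulVec_apply_zero_one_le {ι : Type*}
    [Fintype ι] {K : ι → Matrix (Fin 2) (Fin 2) ℂ} (hNC : IsNonCoherenceGenerating K)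
    (hK : ∑ i, (K i)ᴴ * K i = 1) (ψ : Fin 2 → ℂ) :
    ‖krausApply K (vecMulVec ψ (star ψ)) 0 1‖ ≤ ‖ψ 0‖ * ‖ψ 1‖ := by
  -- `w` has the same off-diagonal entry `z` as `ψ` but both populations equal to `‖z‖`
  -- (for `z = 0`, the junk value `z / 0 = 0` gives `w = 0`).
  set z := ψ 0 * star (ψ 1)
  set w : Fin 2 → ℂ := ![z / (√‖z‖ : ℝ), (√‖z‖ : ℝ)]
  have hwz : w 0 * star (w 1) = z := by
    simp only [w, Matrix.cons_val_zero, Matrix.cons_val_one, RCLike.star_def, Complex.conj_ofReal]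
    exact div_mul_cancel_of_imp fun h => by simpa using h
  have hwz' : w 1 * star (w 0) = star z := by rw [← hwz, star_mul, star_star]
  have hw : ‖w 0‖ = √‖z‖ ∧ ‖w 1‖ = √‖z‖ := by
    simp [w, abs_of_nonneg (Real.sqrt_nonneg _), div_sqrt]
  have hoff :
      krausApply K (vecMulVec ψ (star ψ)) 0 1 = krausApply K (vecMulVec w (star w)) 0 1 := by
    refine hNC.krausApply_apply_eq_of_isDiag_sub ?_ (by decide)
    intro i j hij
    fin_cases i <;> fin_cases j <;>
      simp only [Fin.zero_eta, Fin.mk_one, Matrix.sub_apply, vecMulVec_apply, Pi.star_apply,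
        sub_eq_zero] at hij ⊢
    · exact absurd rfl hij
    · exact hwz.symm
    · rw [hwz', star_mul, star_star]
    · exact absurd rfl hij
  set A := krausApply K (vecMulVec w (star w))
  have htr : (A 0 0).re + (A 1 1).re = 2 * ‖z‖ := by
    have := congrArg Complex.re (trace_krausApply hK (vecMulVec w (star w)))
    rw [trace_fin_two, trace_vecMulVec_star, Fin.sum_univ_two, hw.1, hw.2,
      Real.sq_sqrt (norm_nonneg z)] at this
    simpa [two_mul] using this
  have hA : ‖A 0 1‖ ^ 2 ≤ (A 0 0).re * (A 1 1).re :=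
    (posSemidef_vecMulVec_self_star w).krausApply.norm_apply_zero_one_sq_le
  have hz : ‖ψ 0‖ * ‖ψ 1‖ = ‖z‖ := by simp [z]
  rw [hoff, hz, ← pow_le_pow_iff_left₀ (norm_nonneg _) (norm_nonneg z) two_ne_zero]
  nlinarith [sq_nonneg ((A 0 0).re - (A 1 1).re), congrArg (· ^ 2) htr]

def IsPureDecomp {ι n : Type*} [Fintype ι] [Fintype n] (ρ : Matrix n n ℂ) (p : ι → ℝ)
    (ψ : ι → n → ℂ) : Prop :=
  (∀ i, 0 ≤ p i) ∧ ∑ i, p i = 1 ∧ (∀ i, ∑ j, ‖ψ i j‖ ^ 2 = 1) ∧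
    ρ = ∑ i, (p i : ℂ) • vecMulVec (ψ i) (star (ψ i))

lemma IsDensityMatrix.exists_fin_two {σ : Matrix (Fin 2) (Fin 2) ℂ} (hσ : IsDensityMatrix σ) :
    ∃ x : ℝ, σ 0 0 = x ∧ σ 1 1 = 1 - x ∧ σ 1 0 = star (σ 0 1) ∧
      ‖σ 0 1‖ ^ 2 ≤ x * (1 - x) := by
  have htr : (σ 0 0).re + (σ 1 1).re = 1 := by
    simpa [trace_fin_two] using congrArg Complex.re hσ.2
  refine ⟨(σ 0 0).re, (hσ.1.1.coe_re_apply_self 0).symm, ?_, (hσ.1.1.apply 1 0).symm, ?_⟩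
  · rw [← hσ.1.1.coe_re_apply_self 1, RCLike.re_to_complex]
    rw [show (σ 1 1).re = 1 - (σ 0 0).re by linarith]
    push_cast
    rfl
  · rw [← htr, add_sub_cancel_left]
    exact hσ.1.norm_apply_zero_one_sq_le

lemma Real.exists_sq_add_sq_eq_one_mul_eq {c : ℝ} (h₁ : -1 ≤ 2 * c) (h₂ : 2 * c ≤ 1) :
    ∃ α β : ℝ, α ^ 2 + β ^ 2 = 1 ∧ α * β = c := by
  set θ := arcsin (2 * c) / 2
  refine ⟨cos θ, sin θ, cos_sq_add_sin_sq θ, ?_⟩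
  have h2θ := sin_two_mul θ
  rw [show 2 * θ = arcsin (2 * c) by ring, sin_arcsin h₁ h₂] at h2θ
  linarith

lemma IsDensityMatrix.exists_isPureDecomp_fin_two {σ : Matrix (Fin 2) (Fin 2) ℂ}
    (hσ : IsDensityMatrix σ) :
    ∃ (q : Fin 2 → ℝ) (χ : Fin 2 → Fin 2 → ℂ),
      IsPureDecomp σ q χ ∧ ∀ k, ‖χ k 0‖ * ‖χ k 1‖ = ‖σ 0 1‖ := by
  obtain ⟨x, h00, h11, h10, hcx⟩ := hσ.exists_fin_two
  set c := ‖σ 0 1‖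
  have hc0 : 0 ≤ c := norm_nonneg _
  have hc1 : 2 * c ≤ 1 := by nlinarith [sq_nonneg (2 * x - 1)]
  obtain ⟨α, β, hnorm, hαβ⟩ := exists_sq_add_sq_eq_one_mul_eq (by linarith) hc1
  have hx : x ∈ segment ℝ (β ^ 2) (α ^ 2) := by
    rw [segment_eq_Icc']
    have : (x - α ^ 2) * (x - β ^ 2) ≤ 0 := by
      rw [show (x - α ^ 2) * (x - β ^ 2) = x ^ 2 - x + c ^ 2 by
        rw [← hαβ]; linear_combination (-x) * hnorm]
      linarith
    rcases le_total (β ^ 2) (α ^ 2) with h | h <;>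
      simp only [min_eq_left, min_eq_right, max_eq_left, max_eq_right, h, Set.mem_Icc] <;>
      constructor <;> nlinarith
  obtain ⟨a, b, ha, hb, hab, hxab⟩ := hx
  -- `(uα, β)` and `(uβ, α)` both have off-diagonal entry `u α β = σ₀₁`; their populations
  -- `α², β²` are swapped, and the weights `b, a` interpolate `σ₀₀` between them.
  set u := Complex.exp (Complex.arg (σ 0 1) * Complex.I)
  have hu : ‖u‖ = 1 := Complex.norm_exp_ofReal_mul_I _
  have huu : u * star u = 1 := by rw [RCLike.star_def, Complex.mul_conj', hu]; norm_num
  have hσ01 : σ 0 1 = c * u := (Complex.norm_mul_exp_arg_mul_I _).symm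
  refine ⟨![b, a], ![![u * α, β], ![u * β, α]], ⟨?_, ?_, ?_, ?_⟩, ?_⟩
  · intro k; fin_cases k <;> simpa
  · simp [Fin.sum_univ_two]; linarith
  · intro k; fin_cases k <;> simp [Fin.sum_univ_two, hu, hnorm, add_comm]
  · have hxabC : (a : ℂ) * β ^ 2 + b * α ^ 2 = x := by exact_mod_cast hxab
    have habC : (a : ℂ) + b = 1 := by exact_mod_cast hab
    have hnormC : (α : ℂ) ^ 2 + β ^ 2 = 1 := by exact_mod_cast hnorm
    have hαβC : (α : ℂ) * β = c := by exact_mod_cast hαβ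
    ext i j
    fin_cases i <;> fin_cases j <;>
      simp only [Fin.sum_univ_two, Matrix.add_apply, Matrix.smul_apply, vecMulVec_apply,
        Pi.star_apply, cons_val_zero, cons_val_one, Fin.zero_eta, Fin.mk_one, h00, h11, h10,
        hσ01, star_mul', RCLike.star_def, Complex.conj_ofReal] at huu ⊢
    · linear_combination -hxabC - (b * α ^ 2 + a * β ^ 2) * huu
    · linear_combination (-u) * hαβC - u * α * β * habC
    · linear_combination (-(starRingEnd ℂ) u) * hαβC - (starRingEnd ℂ) u * α * β * habC
    · linear_combination hxabC - (a + b) * hnormC - habC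
  · intro k; fin_cases k <;> simp [hu, ← abs_mul, mul_comm β, hαβ, abs_of_nonneg hc0]

lemma Fintype.sum_equivFin_symm_subtype {ι M : Type*} [Fintype ι] [AddCommMonoid M]
    (P : ι → Prop) [DecidablePred P] (f : ι → M) (hf : ∀ i, ¬P i → f i = 0) :
    ∑ k, f ((Fintype.equivFin {i // P i}).symm k) = ∑ i, f i := by
  rw [(Fintype.equivFin {i // P i}).symm.sum_comp (fun i => f i),
    ← Fintype.sum_subtype_add_sum_subtype P f, Fintype.sum_eq_zero (fun i : {i // ¬P i} => f i)
      fun i => hf i i.2, add_zero]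

section CoherenceOfFormation

variable {ι n : Type*} [Fintype ι] [Fintype n] {ρ : Matrix n n ℂ}

lemma IsPureDecomp.exists_pos {p : ι → ℝ} {ψ : ι → n → ℂ} (h : IsPureDecomp ρ p ψ) :
    ∃ (m : ℕ) (q : Fin m → ℝ) (φ : Fin m → n → ℂ), (∀ k, 0 < q k) ∧ IsPureDecomp ρ q φ ∧
      ∑ k, q k * shannon2 (fun j => ‖φ k j‖ ^ 2) =
        ∑ i, p i * shannon2 (fun j => ‖ψ i j‖ ^ 2) := by
  classical
  obtain ⟨hp, hsum, hψ, hρ⟩ := h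
  set e := (Fintype.equivFin {i // p i ≠ 0}).symm
  refine ⟨_, fun k => p (e k), fun k => ψ (e k), fun k => (hp _).lt_of_ne' (e k).2,
    ⟨fun k => hp _, ?_, fun k => hψ _, ?_⟩, ?_⟩
  · exact (Fintype.sum_equivFin_symm_subtype _ p fun _ h => not_not.1 h).trans hsum
  · exact hρ.trans (Fintype.sum_equivFin_symm_subtype _ _ fun i h => by simp [not_not.1 h]).symm
  · exact Fintype.sum_equivFin_symm_subtype _ (fun i => p i * shannon2 fun j => ‖ψ i j‖ ^ 2)
      fun i h => by simp [not_not.1 h]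

lemma IsPureDecomp.Cf_le {p : ι → ℝ} {ψ : ι → n → ℂ} (h : IsPureDecomp ρ p ψ) :
    Cf ρ ≤ ∑ i, p i * shannon2 (fun j => ‖ψ i j‖ ^ 2) := by
  obtain ⟨m, q, φ, hq, ⟨-, hsum, hφ, hρ⟩, hval⟩ := h.exists_pos
  refine csInf_le ⟨0, ?_⟩ ⟨m, q, φ, hq, hsum, hφ, hρ, hval.symm⟩
  rintro _ ⟨m, q, φ, hq, -, hφ, -, rfl⟩
  refine Finset.sum_nonneg fun i _ => mul_nonneg (hq i).le <|
    shannon2_nonneg (fun j => sq_nonneg _) fun j => ?_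
  exact (hφ i).symm ▸ Finset.single_le_sum (fun j _ => sq_nonneg ‖φ i j‖) (Finset.mem_univ j)

lemma le_Cf_of_forall_isPureDecomp {p₀ : ι → ℝ} {ψ₀ : ι → n → ℂ} (h₀ : IsPureDecomp ρ p₀ ψ₀)
    {a : ℝ} (ha : ∀ (m : ℕ) (p : Fin m → ℝ) (ψ : Fin m → n → ℂ), IsPureDecomp ρ p ψ →
      a ≤ ∑ i, p i * shannon2 (fun j => ‖ψ i j‖ ^ 2)) : a ≤ Cf ρ := by
  obtain ⟨m, q, φ, hq, ⟨-, hsum, hφ, hρ⟩, -⟩ := h₀.exists_pos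
  refine le_csInf ⟨_, m, q, φ, hq, hsum, hφ, hρ, rfl⟩ ?_
  rintro _ ⟨m, p, ψ, hp, hsum, hψ, hρ, rfl⟩
  exact ha m p ψ ⟨fun i => (hp i).le, hsum, hψ, hρ⟩

lemma Cf_sum_smul_le {κ : Type*} [Fintype κ] {p : ι → ℝ} (hp : ∀ i, 0 ≤ p i)
    (hsum : ∑ i, p i = 1) {σ : ι → Matrix n n ℂ} {q : ι → κ → ℝ} {χ : ι → κ → n → ℂ}
    (hσ : ∀ i, IsPureDecomp (σ i) (q i) (χ i)) :
    Cf (∑ i, (p i : ℂ) • σ i) ≤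
      ∑ i, p i * ∑ k, q i k * shannon2 (fun j => ‖χ i k j‖ ^ 2) := by
  have h : IsPureDecomp (∑ i, (p i : ℂ) • σ i) (fun ik : ι × κ => p ik.1 * q ik.1 ik.2)
      (fun ik => χ ik.1 ik.2) := by
    refine ⟨fun ik => mul_nonneg (hp _) ((hσ _).1 _), ?_, fun ik => (hσ _).2.2.1 _, ?_⟩
    · simp only [Fintype.sum_prod_type, ← Finset.mul_sum, (hσ _).2.1, mul_one, hsum]
    · simp only [Fintype.sum_prod_type, (hσ _).2.2.2, Finset.smul_sum, smul_smul,
        Complex.ofReal_mul]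
  simpa only [Fintype.sum_prod_type, Finset.mul_sum, mul_assoc] using h.Cf_le

end CoherenceOfFormation

lemma IsNonCoherenceGenerating.exists_isPureDecomp_krausApply_vecMulVec {ι : Type*} [Fintype ι]
    {K : ι → Matrix (Fin 2) (Fin 2) ℂ} (hNC : IsNonCoherenceGenerating K)
    (hK : ∑ i, (K i)ᴴ * K i = 1) {ψ : Fin 2 → ℂ} (hψ : ∑ j, ‖ψ j‖ ^ 2 = 1) :
    ∃ (r : Fin 2 → ℝ) (φ : Fin 2 → Fin 2 → ℂ),
      IsPureDecomp (krausApply K (vecMulVec ψ (star ψ))) r φ ∧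
        ∑ k, r k * shannon2 (fun j => ‖φ k j‖ ^ 2) ≤ shannon2 (fun j => ‖ψ j‖ ^ 2) := by
  obtain ⟨r, φ, hφ, hcoh⟩ :=
    ((isDensityMatrix_vecMulVec hψ).krausApply hK).exists_isPureDecomp_fin_two
  refine ⟨r, φ, hφ, ?_⟩
  calc ∑ k, r k * shannon2 (fun j => ‖φ k j‖ ^ 2)
      ≤ ∑ k, r k * shannon2 (fun j => ‖ψ j‖ ^ 2) :=
        Finset.sum_le_sum fun k _ => mul_le_mul_of_nonneg_left
          (shannon2_normSq_le_of_norm_mul_le (hφ.2.2.1 k) hψ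
            ((hcoh k).trans_le (hNC.norm_krausApply_vecMulVec_apply_zero_one_le hK ψ)))
          (hφ.1 k)
    _ = shannon2 (fun j => ‖ψ j‖ ^ 2) := by rw [← Finset.sum_mul, hφ.2.1, one_mul]

/-- **Theorem 2.** The coherence of formation of a single-qubit state cannot be increased
by a non-coherence-generating qubit channel. -/
theorem Cf_monotone_under_qubit_NC (N : ℕ)
    (K : Fin N → Matrix (Fin 2) (Fin 2) ℂ)
    (hKraus : ∑ i, (K i)ᴴ * K i = 1)
    (hNC : ∀ σ : Matrix (Fin 2) (Fin 2) ℂ,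
      IsDensityMatrix σ → σ.IsDiag → (krausApply K σ).IsDiag)
    (ρ : Matrix (Fin 2) (Fin 2) ℂ) (hρ : IsDensityMatrix ρ) :
    Cf (krausApply K ρ) ≤ Cf ρ := by
  obtain ⟨q₀, χ₀, h₀, -⟩ := hρ.exists_isPureDecomp_fin_two
  refine le_Cf_of_forall_isPureDecomp h₀ fun m p ψ ⟨hp, hsum, hψ, hρψ⟩ => ?_
  choose r φ hφ hle using fun i =>
    IsNonCoherenceGenerating.exists_isPureDecomp_krausApply_vecMulVec hNC hKraus (hψ i)
  have hΛρ : krausApply K ρ = ∑ i, (p i : ℂ) • krausApply K (vecMulVec (ψ i) (star (ψ i))) := by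
    simp only [hρψ, ← krausApplyₗ_apply, map_sum, map_smul]
  rw [hΛρ]
  exact (Cf_sum_smul_le hp hsum hφ).trans
    (Finset.sum_le_sum fun i _ => mul_le_mul_of_nonneg_left (hle i) (hp i))
end

section
/- Let E₁ = (1/2)[[1, 0], [-1, √2]], E₂ = (1/2)[[1, √2], [1, 0]], and let Φ⁺ = |Φ⁺⟩⟨Φ⁺| with |Φ⁺⟩ = (1/√2)(|00⟩ + |11⟩). Let ρ_out = (I₂⊗E₁)Φ⁺(I₂⊗E₁)† + (I₂⊗E₂)Φ⁺(I₂⊗E₂)†. Then ρ_out = (1/2)(|v₁⟩⟨v₁| + |v₂⟩⟨v₂|), where v₁ = (1/√2)(sin(π/8)|00⟩ + cos(π/8)|01⟩ + cos(π/8)|10⟩ - sin(π/8)|11⟩) and v₂ = (1/√2)(cos(π/8)|00⟩ - sin(π/8)|01⟩ + sin(π/8)|10⟩ + cos(π/8)|11⟩), and the coherence of formation of ρ_out in the product basis satisfies C_f(ρ_out) > 1. -/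
/-! The Kraus images `uₖ = (I ⊗ Eₖ)|Φ⁺⟩` give `ρ_out = |u₁⟩⟨u₁| + |u₂⟩⟨u₂|`, and `(v₁, v₂)/√2` is
the rotation of `(u₁, u₂)` through `π/8`, whence the spectral form.

Every vector of a pure decomposition of `ρ_out` is orthogonal to the kernel of `ρ_out`, so it lies
in `span {u₁, u₂}` and has the form `(a, b, (a + b)/√2, (a - b)/√2)`. Its populations split into
the pairs `(|a|², |b|²)` and `(|a + b|²/2, |a - b|²/2)`, each of total weight `1/2`. By
`-t ln t ≥ t (1 - t)`, a pair `(x, y)` with `x + y = 1/2` carries at least `ln 2 / 2 + 4xy` nats,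
and `|a + b| |a - b| ≥ ||a|² - |b|²|` makes the two products sum to at least `1/16`. Hence every
decomposition costs at least `1 + 1/(4 ln 2)` bits. -/

open Matrix BigOperators Kronecker ComplexOrder

/-- The Kraus operator `E₁ = (1/2)[[1, 0], [-1, √2]]` from the paper's example. -/
noncomputable def E1ex : Matrix (Fin 2) (Fin 2) ℂ :=
  (1 / 2 : ℂ) • !![1, 0; -1, (Real.sqrt 2 : ℂ)]

/-- The Kraus operator `E₂ = (1/2)[[1, √2], [1, 0]]` from the paper's example. -/
noncomputable def E2ex : Matrix (Fin 2) (Fin 2) ℂ :=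
  (1 / 2 : ℂ) • !![1, (Real.sqrt 2 : ℂ); 1, 0]

/-- `v₁ = (1/√2)(sin(π/8)|00⟩ + cos(π/8)|01⟩ + cos(π/8)|10⟩ - sin(π/8)|11⟩)`. -/
noncomputable def v1ex : Fin 2 × Fin 2 → ℂ := fun p =>
  (Real.sqrt 2 : ℂ)⁻¹ *
    !![(Real.sin (Real.pi / 8) : ℂ), (Real.cos (Real.pi / 8) : ℂ);
       (Real.cos (Real.pi / 8) : ℂ), -(Real.sin (Real.pi / 8) : ℂ)] p.1 p.2

/-- `v₂ = (1/√2)(cos(π/8)|00⟩ - sin(π/8)|01⟩ + sin(π/8)|10⟩ + cos(π/8)|11⟩)`. -/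
noncomputable def v2ex : Fin 2 × Fin 2 → ℂ := fun p =>
  (Real.sqrt 2 : ℂ)⁻¹ *
    !![(Real.cos (Real.pi / 8) : ℂ), -(Real.sin (Real.pi / 8) : ℂ);
       (Real.sin (Real.pi / 8) : ℂ), (Real.cos (Real.pi / 8) : ℂ)] p.1 p.2

/-- The vector `|Φ⁺⟩ = (1/√2)(|00⟩ + |11⟩)`. -/
noncomputable def phiPlus : Fin 2 × Fin 2 → ℂ :=
  fun p => if p.1 = p.2 then ((Real.sqrt 2 : ℂ))⁻¹ else 0

open Real

lemma shannon2_eq_sum_negMulLog_div {n : Type*} [Fintype n] (p : n → ℝ) :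
    shannon2 p = (∑ i, negMulLog (p i)) / log 2 := by
  simp only [shannon2, negMulLog, logb, Finset.sum_div]
  rw [← Finset.sum_neg_distrib]
  exact Finset.sum_congr rfl fun i _ => by ring

lemma mul_one_sub_le_negMulLog {x : ℝ} (hx : 0 ≤ x) : x * (1 - x) ≤ negMulLog x := by
  rcases hx.eq_or_lt with rfl | hx
  · simp
  · rw [negMulLog]
    nlinarith [log_le_sub_one_of_pos hx]

lemma log_two_div_two_add_le_negMulLog_add {x y : ℝ} (hx : 0 ≤ x) (hy : 0 ≤ y)
    (hxy : x + y = 1 / 2) : log 2 / 2 + 4 * x * y ≤ negMulLog x + negMulLog y := by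
  have hscale : ∀ t, negMulLog (2 * t) = 2 * negMulLog t - 2 * t * log 2 := fun t => by
    rw [negMulLog_mul, negMulLog]; ring
  have hx' := mul_one_sub_le_negMulLog (by positivity : 0 ≤ 2 * x)
  have hy' := mul_one_sub_le_negMulLog (by positivity : 0 ≤ 2 * y)
  rw [hscale, show 1 - 2 * x = 2 * y by linarith] at hx'
  rw [hscale, show 1 - 2 * y = 2 * x by linarith] at hy'
  have hlog : x * log 2 + y * log 2 = log 2 / 2 := by rw [← add_mul, hxy]; ring
  linarith

lemma abs_norm_sq_sub_norm_sq_le {𝕜 : Type*} [NormedField 𝕜] (a b : 𝕜) :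
    |‖a‖ ^ 2 - ‖b‖ ^ 2| ≤ ‖a + b‖ * ‖a - b‖ := by
  rw [← norm_mul, ← norm_pow, ← norm_pow, show (a + b) * (a - b) = a ^ 2 - b ^ 2 by ring]
  exact abs_norm_sub_norm_le _ _

lemma one_add_le_shannon2 (ψ : Fin 2 × Fin 2 → ℂ) (hψ : ∑ j, ‖ψ j‖ ^ 2 = 1)
    (h₀ : √2 * ψ (1, 0) = ψ (0, 0) + ψ (0, 1)) (h₁ : √2 * ψ (1, 1) = ψ (0, 0) - ψ (0, 1)) :
    1 + 1 / (4 * log 2) ≤ shannon2 fun j => ‖ψ j‖ ^ 2 := by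
  set a := ψ (0, 0)
  set b := ψ (0, 1)
  have hnorm : ∀ z w : ℂ, √2 * z = w → ‖z‖ ^ 2 = ‖w‖ ^ 2 / 2 := fun z w h => by
    rw [← h, norm_mul, Complex.norm_real, norm_of_nonneg (sqrt_nonneg 2), mul_pow,
      sq_sqrt zero_le_two]; ring
  have hpar := parallelogram_law_with_norm ℝ a b
  have hprod := abs_norm_sq_sub_norm_sq_le a b
  rw [Fintype.sum_prod_type, Fin.sum_univ_two, Fin.sum_univ_two, Fin.sum_univ_two,
    hnorm _ _ h₀, hnorm _ _ h₁] at hψ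
  have hhalf : ‖a‖ ^ 2 + ‖b‖ ^ 2 = 1 / 2 := by nlinarith
  have hcross : 1 / 16 ≤ ‖a‖ ^ 2 * ‖b‖ ^ 2 + ‖a + b‖ ^ 2 / 2 * (‖a - b‖ ^ 2 / 2) := by
    have := sq_le_sq' (abs_le.mp hprod).1 (abs_le.mp hprod).2
    nlinarith
  have htop := log_two_div_two_add_le_negMulLog_add (sq_nonneg ‖a‖) (sq_nonneg ‖b‖) hhalf
  have hbot := log_two_div_two_add_le_negMulLog_add (by positivity : 0 ≤ ‖a + b‖ ^ 2 / 2)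
    (by positivity : 0 ≤ ‖a - b‖ ^ 2 / 2) (by nlinarith)
  have hl2 : 0 < log 2 := log_pos one_lt_two
  have hquarter : 1 / (4 * log 2) * log 2 = 1 / 4 := by field_simp
  rw [shannon2_eq_sum_negMulLog_div, Fintype.sum_prod_type, Fin.sum_univ_two, Fin.sum_univ_two,
    Fin.sum_univ_two, hnorm _ _ h₀, hnorm _ _ h₁, le_div_iff₀ hl2, add_mul, hquarter]
  linarith

section Decomposition

variable {n : Type*} [Fintype n]

structure IsPureDecomposition {m : ℕ} (ρ : Matrix n n ℂ) (p : Fin m → ℝ) (ψ : Fin m → n → ℂ) :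
    Prop where
  pos : ∀ i, 0 < p i
  sum_eq_one : ∑ i, p i = 1
  norm_sq : ∀ i, ∑ j, ‖ψ i j‖ ^ 2 = 1
  eq_sum : ρ = ∑ i, (p i : ℂ) • vecMulVec (ψ i) (star (ψ i))

lemma le_Cf {ρ : Matrix n n ℂ} {c : ℝ}
    (hne : ∃ (m : ℕ) (p : Fin m → ℝ) (ψ : Fin m → n → ℂ), IsPureDecomposition ρ p ψ)
    (hle : ∀ (m : ℕ) (p : Fin m → ℝ) (ψ : Fin m → n → ℂ), IsPureDecomposition ρ p ψ →
      ∀ i, c ≤ shannon2 fun j => ‖ψ i j‖ ^ 2) :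
    c ≤ Cf ρ := by
  obtain ⟨m, p, ψ, hd⟩ := hne
  refine le_csInf ⟨_, m, p, ψ, hd.pos, hd.sum_eq_one, hd.norm_sq, hd.eq_sum, rfl⟩ ?_
  rintro _ ⟨m, p, ψ, hp, hp1, hψ, hρ, rfl⟩
  calc c = ∑ i, p i * c := by rw [← Finset.sum_mul, hp1, one_mul]
    _ ≤ _ := Finset.sum_le_sum fun i _ =>
      mul_le_mul_of_nonneg_left (hle m p ψ ⟨hp, hp1, hψ, hρ⟩ i) (hp i).le

lemma isPureDecomposition_half {x y : n → ℂ} (hx : ∑ j, ‖x j‖ ^ 2 = 1)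
    (hy : ∑ j, ‖y j‖ ^ 2 = 1) :
    IsPureDecomposition ((1 / 2 : ℂ) • (vecMulVec x (star x) + vecMulVec y (star y)))
      ![1 / 2, 1 / 2] ![x, y] where
  pos i := by fin_cases i <;> norm_num
  sum_eq_one := by norm_num
  norm_sq i := by fin_cases i <;> assumption
  eq_sum := by
    simp only [Fin.sum_univ_two, smul_add, Matrix.cons_val_zero, Matrix.cons_val_one]
    norm_num

/-- Every vector of a pure decomposition of `ρ` is orthogonal to the kernel of `ρ`, since
`⟨w, ρ w⟩ = ∑ pᵢ |⟨w, ψᵢ⟩|²`. -/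
lemma IsPureDecomposition.star_dotProduct_eq_zero {m : ℕ} {ρ : Matrix n n ℂ}
    {p : Fin m → ℝ} {ψ : Fin m → n → ℂ} (hd : IsPureDecomposition ρ p ψ) {w : n → ℂ}
    (hw : ρ *ᵥ w = 0) (i : Fin m) : star w ⬝ᵥ ψ i = 0 := by
  have hquad : star w ⬝ᵥ (ρ *ᵥ w) = ((∑ i, p i * ‖star w ⬝ᵥ ψ i‖ ^ 2 : ℝ) : ℂ) := by
    rw [hd.eq_sum, sum_mulVec, dotProduct_sum]
    push_cast
    refine Finset.sum_congr rfl fun i _ => ?_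
    rw [smul_mulVec, vecMulVec_mulVec, dotProduct_smul, dotProduct_smul, star_dotProduct,
      ← Complex.mul_conj', op_smul_eq_smul]
    simp [mul_comm]
  rw [hw, dotProduct_zero, eq_comm, Complex.ofReal_eq_zero,
    Finset.sum_eq_zero_iff_of_nonneg fun j _ => by have := (hd.pos j).le; positivity] at hquad
  simpa [(hd.pos i).ne'] using hquad i (Finset.mem_univ i)

end Decomposition

lemma mul_vecMulVec_star_mul_conjTranspose {m n α : Type*} [Fintype n] [Semiring α] [StarRing α]
    (A : Matrix m n α) (x : n → α) :
    A * vecMulVec x (star x) * Aᴴ = vecMulVec (A *ᵥ x) (star (A *ᵥ x)) := by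
  rw [mul_vecMulVec, vecMulVec_mul, star_mulVec]

lemma vecMulVec_rotate_add {n R : Type*} [CommRing R] [StarRing R] {c s : R}
    (hc : IsSelfAdjoint c) (hs : IsSelfAdjoint s) (h : c ^ 2 + s ^ 2 = 1) (x y : n → R) :
    vecMulVec (c • x + s • y) (star (c • x + s • y)) +
        vecMulVec (-s • x + c • y) (star (-s • x + c • y)) =
      vecMulVec x (star x) + vecMulVec y (star y) := by
  ext i j
  simp only [Matrix.add_apply, vecMulVec_apply, Pi.add_apply, Pi.smul_apply, Pi.star_apply,
    smul_eq_mul, star_add, star_mul', star_neg, hc.star_eq, hs.star_eq]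
  linear_combination (x i * star (x j) + y i * star (y j)) * h

lemma one_kronecker_mulVec_phiPlus (E : Matrix (Fin 2) (Fin 2) ℂ) :
    ((1 : Matrix (Fin 2) (Fin 2) ℂ) ⊗ₖ E) *ᵥ phiPlus = fun q => (√2 : ℂ)⁻¹ * E q.2 q.1 := by
  ext ⟨i, j⟩
  fin_cases i <;> fin_cases j <;>
    simp [mulVec, dotProduct, Fintype.sum_prod_type, phiPlus, kroneckerMap_apply, one_apply,
      mul_comm]

noncomputable def u1ex : Fin 2 × Fin 2 → ℂ := ((1 : Matrix (Fin 2) (Fin 2) ℂ) ⊗ₖ E1ex) *ᵥ phiPlus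

noncomputable def u2ex : Fin 2 × Fin 2 → ℂ := ((1 : Matrix (Fin 2) (Fin 2) ℂ) ⊗ₖ E2ex) *ᵥ phiPlus

lemma sqrt_two_mul_cos_pi_div_eight : √2 * cos (π / 8) = cos (π / 8) + sin (π / 8) := by
  have h := cos_sub (π / 4) (π / 8)
  rw [show π / 4 - π / 8 = π / 8 by ring, cos_pi_div_four, sin_pi_div_four] at h
  linear_combination √2 * h + (cos (π / 8) + sin (π / 8)) / 2 * mul_self_sqrt zero_le_two

lemma sqrt_two_mul_sin_pi_div_eight : √2 * sin (π / 8) = cos (π / 8) - sin (π / 8) := by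
  have h := sin_sub (π / 4) (π / 8)
  rw [show π / 4 - π / 8 = π / 8 by ring, cos_pi_div_four, sin_pi_div_four] at h
  linear_combination √2 * h + (cos (π / 8) - sin (π / 8)) / 2 * mul_self_sqrt zero_le_two

lemma v1ex_eq_and_v2ex_eq :
    v1ex = (√2 : ℂ) • (-(sin (π / 8) : ℂ) • u1ex + (cos (π / 8) : ℂ) • u2ex) ∧
      v2ex = (√2 : ℂ) • ((cos (π / 8) : ℂ) • u1ex + (sin (π / 8) : ℂ) • u2ex) := by
  have hc : (√2 : ℂ) * (cos (π / 8) : ℂ) = cos (π / 8) + sin (π / 8) := by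
    exact_mod_cast sqrt_two_mul_cos_pi_div_eight
  have hs : (√2 : ℂ) * (sin (π / 8) : ℂ) = cos (π / 8) - sin (π / 8) := by
    exact_mod_cast sqrt_two_mul_sin_pi_div_eight
  have h2 : (√2 : ℂ) ^ 2 = 2 := by exact_mod_cast sq_sqrt zero_le_two
  constructor <;> ext ⟨i, j⟩ <;> fin_cases i <;> fin_cases j <;>
    simp only [v1ex, v2ex, u1ex, u2ex, one_kronecker_mulVec_phiPlus, E1ex, E2ex, of_apply,
      cons_val', cons_val_zero, cons_val_one, cons_val_fin_one, smul_of, smul_cons, smul_empty,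
      smul_eq_mul, Pi.smul_apply, Pi.add_apply, Fin.mk_one, Fin.zero_eta] <;>
    grind

lemma output_state_eq_half_smul :
    vecMulVec u1ex (star u1ex) + vecMulVec u2ex (star u2ex) =
      (1 / 2 : ℂ) • (vecMulVec v1ex (star v1ex) + vecMulVec v2ex (star v2ex)) := by
  obtain ⟨hv1, hv2⟩ := v1ex_eq_and_v2ex_eq
  have h2 : (1 / 2 : ℂ) * (√2 * star (√2 : ℂ)) = 1 := by
    rw [Complex.star_def, Complex.conj_ofReal, ← Complex.ofReal_mul, mul_self_sqrt zero_le_two]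
    norm_num
  rw [hv1, hv2, star_smul, star_smul, smul_vecMulVec, smul_vecMulVec, vecMulVec_smul,
    vecMulVec_smul, smul_smul, smul_smul, ← smul_add, smul_smul, h2, one_smul]
  refine (vecMulVec_rotate_add ?_ ?_ ?_ u1ex u2ex).symm.trans (add_comm _ _)
  · exact Complex.conj_ofReal _
  · exact Complex.conj_ofReal _
  · exact_mod_cast cos_sq_add_sin_sq (π / 8)

lemma star_u1ex_dotProduct (w : Fin 2 × Fin 2 → ℂ) :
    star u1ex ⬝ᵥ w = (w (0, 0) - w (0, 1) + √2 * w (1, 1)) / (2 * √2) := by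
  simp only [dotProduct, Fintype.sum_prod_type, Fin.sum_univ_two, u1ex,
    one_kronecker_mulVec_phiPlus, E1ex, smul_of, smul_cons, smul_empty, smul_eq_mul, of_apply,
    cons_val', cons_val_zero, cons_val_one, cons_val_fin_one, Pi.star_apply, star_mul', star_inv₀,
    RCLike.star_def, Complex.conj_ofReal, map_div₀, map_mul, map_neg, map_one, map_ofNat, map_zero]
  ring

lemma star_u2ex_dotProduct (w : Fin 2 × Fin 2 → ℂ) :
    star u2ex ⬝ᵥ w = (w (0, 0) + w (0, 1) + √2 * w (1, 0)) / (2 * √2) := by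
  simp only [dotProduct, Fintype.sum_prod_type, Fin.sum_univ_two, u2ex,
    one_kronecker_mulVec_phiPlus, E2ex, smul_of, smul_cons, smul_empty, smul_eq_mul, of_apply,
    cons_val', cons_val_zero, cons_val_one, cons_val_fin_one, Pi.star_apply, star_mul', star_inv₀,
    RCLike.star_def, Complex.conj_ofReal, map_div₀, map_mul, map_one, map_ofNat, map_zero]
  ring

lemma IsPureDecomposition.sqrt_two_mul_apply {m : ℕ} {p : Fin m → ℝ}
    {ψ : Fin m → Fin 2 × Fin 2 → ℂ}
    (hd : IsPureDecomposition (vecMulVec u1ex (star u1ex) + vecMulVec u2ex (star u2ex)) p ψ)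
    (i : Fin m) :
    √2 * ψ i (1, 0) = ψ i (0, 0) + ψ i (0, 1) ∧ √2 * ψ i (1, 1) = ψ i (0, 0) - ψ i (0, 1) := by
  have hker (w : Fin 2 × Fin 2 → ℂ) (h₁ : w (0, 0) - w (0, 1) + √2 * w (1, 1) = 0)
      (h₂ : w (0, 0) + w (0, 1) + √2 * w (1, 0) = 0) :
      (vecMulVec u1ex (star u1ex) + vecMulVec u2ex (star u2ex)) *ᵥ w = 0 := by
    simp [add_mulVec, vecMulVec_mulVec, star_u1ex_dotProduct, star_u2ex_dotProduct, h₁, h₂]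
  have h2 : (√2 : ℂ) * √2 = 2 := by exact_mod_cast mul_self_sqrt zero_le_two
  have h₁ := hd.star_dotProduct_eq_zero
    (hker (fun q => !![1, 1; -√2, 0] q.1 q.2) (by simp) (by norm_num [h2])) i
  have h₂ := hd.star_dotProduct_eq_zero
    (hker (fun q => !![1, -1; 0, -√2] q.1 q.2) (by norm_num [h2]) (by simp)) i
  simp only [dotProduct, Fintype.sum_prod_type, Fin.sum_univ_two, of_apply, cons_val',
    cons_val_zero, cons_val_one, cons_val_fin_one, Pi.star_apply, RCLike.star_def,
    Complex.conj_ofReal, Complex.ofReal_one, Complex.ofReal_zero, Complex.ofReal_neg] at h₁ h₂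
  constructor
  · linear_combination -h₁
  · linear_combination -h₂

lemma sum_norm_sq_v1ex : ∑ j, ‖v1ex j‖ ^ 2 = 1 := by
  simp only [v1ex, Fintype.sum_prod_type, Fin.sum_univ_two, of_apply, cons_val', cons_val_zero,
    cons_val_one, cons_val_fin_one, norm_mul, norm_inv, norm_neg, Complex.norm_real, norm_eq_abs,
    mul_pow, inv_pow, sq_abs, sq_sqrt zero_le_two]
  linear_combination sin_sq_add_cos_sq (π / 8)

lemma sum_norm_sq_v2ex : ∑ j, ‖v2ex j‖ ^ 2 = 1 := by
  simp only [v2ex, Fintype.sum_prod_type, Fin.sum_univ_two, of_apply, cons_val', cons_val_zero,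
    cons_val_one, cons_val_fin_one, norm_mul, norm_inv, norm_neg, Complex.norm_real, norm_eq_abs,
    mul_pow, inv_pow, sq_abs, sq_sqrt zero_le_two]
  linear_combination sin_sq_add_cos_sq (π / 8)

/-- Applying `id ⊗ Λ²₂` to `Φ⁺` yields `(1/2)(|v₁⟩⟨v₁| + |v₂⟩⟨v₂|)`, whose coherence of
formation is strictly larger than 1. -/
theorem output_state_Cf_gt_one :
    (((1 : Matrix (Fin 2) (Fin 2) ℂ) ⊗ₖ E1ex) * Matrix.vecMulVec phiPlus (star phiPlus) *
        ((1 : Matrix (Fin 2) (Fin 2) ℂ) ⊗ₖ E1ex)ᴴ +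
      ((1 : Matrix (Fin 2) (Fin 2) ℂ) ⊗ₖ E2ex) * Matrix.vecMulVec phiPlus (star phiPlus) *
        ((1 : Matrix (Fin 2) (Fin 2) ℂ) ⊗ₖ E2ex)ᴴ =
      (1 / 2 : ℂ) • (Matrix.vecMulVec v1ex (star v1ex) + Matrix.vecMulVec v2ex (star v2ex))) ∧
    1 < Cf (((1 : Matrix (Fin 2) (Fin 2) ℂ) ⊗ₖ E1ex) *
        Matrix.vecMulVec phiPlus (star phiPlus) * ((1 : Matrix (Fin 2) (Fin 2) ℂ) ⊗ₖ E1ex)ᴴ +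
      ((1 : Matrix (Fin 2) (Fin 2) ℂ) ⊗ₖ E2ex) * Matrix.vecMulVec phiPlus (star phiPlus) *
        ((1 : Matrix (Fin 2) (Fin 2) ℂ) ⊗ₖ E2ex)ᴴ) := by
  rw [mul_vecMulVec_star_mul_conjTranspose, mul_vecMulVec_star_mul_conjTranspose, ← u1ex, ← u2ex]
  refine ⟨output_state_eq_half_smul, ?_⟩
  have hl2 : 0 < log 2 := log_pos one_lt_two
  refine (lt_add_of_pos_right 1 (by positivity : 0 < 1 / (4 * log 2))).trans_le (le_Cf ?_ ?_)
  · rw [output_state_eq_half_smul]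
    exact ⟨2, _, _, isPureDecomposition_half sum_norm_sq_v1ex sum_norm_sq_v2ex⟩
  · intro m p ψ hd i
    obtain ⟨h₀, h₁⟩ := hd.sqrt_two_mul_apply i
    exact one_add_le_shannon2 (ψ i) (hd.norm_sq i) h₀ h₁
end

section
/- If Λ is a non-coherence-generating channel on d₁-dimensional states and 𝓔 is a non-coherence-generating channel on d₂-dimensional states, then the tensor product channel Λ⊗𝓔 on d₁d₂-dimensional states (with Kraus operators the Kronecker products K_i ⊗ L_j) is non-coherence-generating: it maps every diagonal d₁d₂×d₁d₂ density matrix to a diagonal matrix. -/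
open Matrix BigOperators Kronecker ComplexOrder

lemma kraus_std {d a : ℕ} (K : Fin a → Matrix (Fin d) (Fin d) ℂ) (k p r : Fin d) :
    krausApply K (Matrix.diagonal (Pi.single k 1)) p r
      = ∑ i, K i p k * star (K i r k) := by
  simp [krausApply, Matrix.sum_apply, Matrix.mul_apply, Matrix.conjTranspose_apply,
    Matrix.diagonal_apply, Pi.single_apply, Finset.sum_ite_eq, Finset.mem_univ, mul_ite, ite_mul, zero_mul, mul_zero]

lemma std_density {d : ℕ} (k : Fin d) :
    IsDensityMatrix (Matrix.diagonal (Pi.single k (1 : ℂ))) := by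
  constructor
  · refine Matrix.posSemidef_diagonal_iff.mpr fun i => ?_
    rcases eq_or_ne i k with h | h <;> simp [h, Pi.single_apply]
  · simp [Matrix.trace_diagonal, Finset.sum_pi_single]

lemma key_factor {d1 d2 a b : ℕ}
    (K : Fin a → Matrix (Fin d1) (Fin d1) ℂ)
    (L : Fin b → Matrix (Fin d2) (Fin d2) ℂ)
    (D : Fin d1 × Fin d2 → ℂ) (x y : Fin d1 × Fin d2) :
    krausApply (fun ij : Fin a × Fin b => K ij.1 ⊗ₖ L ij.2) (Matrix.diagonal D) x y
      = ∑ u : Fin d1 × Fin d2, D u *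
          (∑ i, K i x.1 u.1 * star (K i y.1 u.1)) *
          (∑ j, L j x.2 u.2 * star (L j y.2 u.2)) := by
  simp only [krausApply, Matrix.sum_apply, Matrix.mul_apply, Matrix.conjTranspose_apply,
    Matrix.mul_diagonal, Matrix.kroneckerMap_apply, star_mul']
  rw [Finset.sum_comm]
  refine Finset.sum_congr rfl fun u _ => ?_
  simp only [Matrix.diagonal_apply, mul_ite, mul_zero, Finset.sum_ite_eq', Finset.mem_univ,
    if_true]
  refine Eq.trans (Fintype.sum_prod_type _) ?_
  simp only [Finset.mul_sum, Finset.sum_mul]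
  rw [Finset.sum_comm]
  refine Finset.sum_congr rfl fun j _ => ?_
  refine Finset.sum_congr rfl fun i _ => ?_
  ring

/-- **(P3).** The tensor product of two non-coherence-generating channels is
non-coherence-generating. -/
theorem tensor_of_NC_is_NC (d1 d2 a b : ℕ)
    (K : Fin a → Matrix (Fin d1) (Fin d1) ℂ)
    (L : Fin b → Matrix (Fin d2) (Fin d2) ℂ)
    (hK : ∑ i, (K i)ᴴ * K i = 1) (hL : ∑ j, (L j)ᴴ * L j = 1)
    (hKNC : ∀ σ : Matrix (Fin d1) (Fin d1) ℂ,
      IsDensityMatrix σ → σ.IsDiag → (krausApply K σ).IsDiag)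
    (hLNC : ∀ σ : Matrix (Fin d2) (Fin d2) ℂ,
      IsDensityMatrix σ → σ.IsDiag → (krausApply L σ).IsDiag) :
    ∀ σ : Matrix (Fin d1 × Fin d2) (Fin d1 × Fin d2) ℂ,
      IsDensityMatrix σ → σ.IsDiag →
      (krausApply (fun ij : Fin a × Fin b => K ij.1 ⊗ₖ L ij.2) σ).IsDiag := by
  intro σ hσ hd x y hxy
  have hdd : Matrix.diagonal σ.diag = σ := hd.diagonal_diag
  have hx : x.1 ≠ y.1 ∨ x.2 ≠ y.2 := by
    by_contra h
    push_neg at h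
    exact hxy (Prod.ext h.1 h.2)
  have : (krausApply (fun ij : Fin a × Fin b => K ij.1 ⊗ₖ L ij.2) σ) x y
      = (krausApply (fun ij : Fin a × Fin b => K ij.1 ⊗ₖ L ij.2)
          (Matrix.diagonal σ.diag)) x y := by rw [hdd]
  rw [this, key_factor]
  refine Finset.sum_eq_zero fun u _ => ?_
  rcases hx with h | h
  · have h0 : (∑ i, K i x.1 u.1 * star (K i y.1 u.1)) = 0 := by
      rw [← kraus_std K u.1 x.1 y.1]
      exact hKNC _ (std_density u.1) (Matrix.isDiag_diagonal _) h
    rw [h0, mul_zero, zero_mul]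
  · have h0 : (∑ j, L j x.2 u.2 * star (L j y.2 u.2)) = 0 := by
      rw [← kraus_std L u.2 x.2 y.2]
      exact hLNC _ (std_density u.2) (Matrix.isDiag_diagonal _) h
    rw [h0, mul_zero]
end

section
/- Let θ, φ, ξ, η be real numbers with sinθ·cosθ·sinφ·cosφ ≠ 0, and let Λ¹ be the qubit channel with Kraus operators E¹₁ = [[e^{iη}cosθcosφ, 0], [-sinθsinφ, e^{iξ}cosφ]] and E¹₂ = [[sinθcosφ, e^{iξ}sinφ], [e^{-iη}cosθsinφ, 0]]. Then Λ¹ is not an incoherent operation: there is no finite family of 2×2 matrices {F_i} with ∑_i F_i†F_i = I and ∑_i F_iρF_i† = Λ¹(ρ) for all ρ such that every F_i is an incoherent Kraus operator. -/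
open Matrix BigOperators Kronecker ComplexOrder

/-- First Kraus operator of the channel `Λ¹` from the classification of rank-2 qubit NCs. -/
noncomputable def E11 (θ φ ξ η : ℝ) : Matrix (Fin 2) (Fin 2) ℂ :=
  !![Complex.exp ((η : ℂ) * Complex.I) * (Real.cos θ : ℂ) * (Real.cos φ : ℂ), 0;
     -((Real.sin θ : ℂ) * (Real.sin φ : ℂ)),
       Complex.exp ((ξ : ℂ) * Complex.I) * (Real.cos φ : ℂ)]

/-- Second Kraus operator of the channel `Λ¹` from the classification of rank-2 qubit NCs. -/
noncomputable def E12 (θ φ ξ η : ℝ) : Matrix (Fin 2) (Fin 2) ℂ :=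
  !![(Real.sin θ : ℂ) * (Real.cos φ : ℂ),
       Complex.exp ((ξ : ℂ) * Complex.I) * (Real.sin φ : ℂ);
     Complex.exp (-(η : ℂ) * Complex.I) * (Real.cos θ : ℂ) * (Real.sin φ : ℂ), 0]

/-- A Kraus operator is incoherent if each column has at most one nonzero entry
(equivalently, it maps basis vectors to multiples of basis vectors). -/
def IncoherentKraus (K : Matrix (Fin 2) (Fin 2) ℂ) : Prop :=
  ∀ (j i i' : Fin 2), K i j ≠ 0 → K i' j ≠ 0 → i = i'

lemma mulstd_aux (K : Matrix (Fin 2) (Fin 2) ℂ) (j l i k : Fin 2) :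
    (K * Matrix.single j l (1:ℂ) * Kᴴ) i k = K i j * star (K k l) := by
  simp [Matrix.mul_apply, Matrix.single, Matrix.conjTranspose_apply, Fin.sum_univ_two]
  fin_cases j <;> fin_cases l <;> simp

/-- When `sin θ cos θ sin φ cos φ ≠ 0`, the channel `Λ¹` is not an incoherent operation:
it admits no Kraus decomposition consisting of incoherent Kraus operators. -/
theorem Lambda1_not_incoherent_operation (θ φ ξ η : ℝ)
    (h : Real.sin θ * Real.cos θ * Real.sin φ * Real.cos φ ≠ 0) :
    ¬ ∃ (m : ℕ) (F : Fin m → Matrix (Fin 2) (Fin 2) ℂ),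
        (∑ i, (F i)ᴴ * F i = 1) ∧
        (∀ ρ : Matrix (Fin 2) (Fin 2) ℂ,
          ∑ i, F i * ρ * (F i)ᴴ =
            E11 θ φ ξ η * ρ * (E11 θ φ ξ η)ᴴ + E12 θ φ ξ η * ρ * (E12 θ φ ξ η)ᴴ) ∧
        (∀ i, IncoherentKraus (F i)) := by
  rintro ⟨m, F, -, h2, hinc⟩
  have hsθ : Real.sin θ ≠ 0 := fun h0 => h (by rw [h0]; ring)
  have hcθ : Real.cos θ ≠ 0 := fun h0 => h (by rw [h0]; ring)
  have hsφ : Real.sin φ ≠ 0 := fun h0 => h (by rw [h0]; ring)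
  have hcφ : Real.cos φ ≠ 0 := fun h0 => h (by rw [h0]; ring)
  have hs : (Real.sin θ : ℂ) ≠ 0 := Complex.ofReal_ne_zero.2 hsθ
  have hc : (Real.cos θ : ℂ) ≠ 0 := Complex.ofReal_ne_zero.2 hcθ
  have hs' : (Real.sin φ : ℂ) ≠ 0 := Complex.ofReal_ne_zero.2 hsφ
  have hc' : (Real.cos φ : ℂ) ≠ 0 := Complex.ofReal_ne_zero.2 hcφ
  have heη : Complex.exp ((η : ℂ) * Complex.I) ≠ 0 := Complex.exp_ne_zero _
  have heη' : Complex.exp (-(η : ℂ) * Complex.I) ≠ 0 := Complex.exp_ne_zero _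
  have heη'' : Complex.exp (-((η : ℂ) * Complex.I)) ≠ 0 := Complex.exp_ne_zero _
  have heξ : Complex.exp ((ξ : ℂ) * Complex.I) ≠ 0 := Complex.exp_ne_zero _
  -- Choi-matrix identities
  have key : ∀ j l i k : Fin 2, ∑ n, F n i j * star (F n k l) =
      E11 θ φ ξ η i j * star (E11 θ φ ξ η k l) + E12 θ φ ξ η i j * star (E12 θ φ ξ η k l) := by
    intro j l i k
    have := congrFun (congrFun (h2 (Matrix.single j l (1:ℂ))) i) k
    simpa [Matrix.sum_apply, Matrix.add_apply, mulstd_aux] using this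
  -- entries of the two reference Kraus operators
  have e11_00 : E11 θ φ ξ η 0 0
      = Complex.exp ((η : ℂ) * Complex.I) * (Real.cos θ : ℂ) * (Real.cos φ : ℂ) := by simp [E11]
  have e11_01 : E11 θ φ ξ η 0 1 = 0 := by simp [E11]
  have e11_10 : E11 θ φ ξ η 1 0 = -((Real.sin θ : ℂ) * (Real.sin φ : ℂ)) := by simp [E11]
  have e11_11 : E11 θ φ ξ η 1 1
      = Complex.exp ((ξ : ℂ) * Complex.I) * (Real.cos φ : ℂ) := by simp [E11]
  have e12_00 : E12 θ φ ξ η 0 0 = (Real.sin θ : ℂ) * (Real.cos φ : ℂ) := by simp [E12]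
  have e12_01 : E12 θ φ ξ η 0 1
      = Complex.exp ((ξ : ℂ) * Complex.I) * (Real.sin φ : ℂ) := by simp [E12]
  have e12_10 : E12 θ φ ξ η 1 0
      = Complex.exp (-(η : ℂ) * Complex.I) * (Real.cos θ : ℂ) * (Real.sin φ : ℂ) := by simp [E12]
  have e12_11 : E12 θ φ ξ η 1 1 = 0 := by simp [E12]
  -- find a Kraus operator with nonzero (0,0) and (0,1) entries
  have hne : ∑ n, F n 0 0 * star (F n 0 1) ≠ 0 := by
    rw [key 0 1 0 0, e11_01, e12_00, e12_01]
    simp only [star_zero, mul_zero, zero_add]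
    exact mul_ne_zero (mul_ne_zero hs hc') (star_ne_zero.2 (mul_ne_zero heξ hs'))
  obtain ⟨n0, -, hn0⟩ := Finset.exists_ne_zero_of_sum_ne_zero hne
  have ha : F n0 0 0 ≠ 0 := left_ne_zero_of_mul hn0
  have hb : F n0 0 1 ≠ 0 := fun h0 => hn0 (by rw [h0]; simp)
  have hc0 : F n0 1 0 = 0 := by
    by_contra h0
    exact absurd (hinc n0 0 0 1 ha h0) (by decide)
  have hd0 : F n0 1 1 = 0 := by
    by_contra h0
    exact absurd (hinc n0 1 0 1 hb h0) (by decide)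
  -- the annihilating linear functional
  set u10 : ℂ := -((Real.sin θ : ℂ) * (Real.cos φ : ℂ)) /
    (Complex.exp (-(η : ℂ) * Complex.I) * (Real.cos θ : ℂ) * (Real.sin φ : ℂ)) with hu10
  set u11 : ℂ := -(Complex.exp ((η : ℂ) * Complex.I) * (Real.cos θ : ℂ) * (Real.cos φ : ℂ) +
      u10 * (-((Real.sin θ : ℂ) * (Real.sin φ : ℂ)))) /
    (Complex.exp ((ξ : ℂ) * Complex.I) * (Real.cos φ : ℂ)) with hu11
  set L : Matrix (Fin 2) (Fin 2) ℂ → ℂ := fun K => K 0 0 + u10 * K 1 0 + u11 * K 1 1 with hL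
  have hE1 : L (E11 θ φ ξ η) = 0 := by
    simp only [hL, e11_00, e11_10, e11_11]
    rw [hu11, div_mul_cancel₀ _ (mul_ne_zero heξ hc')]
    ring
  have hE2 : L (E12 θ φ ξ η) = 0 := by
    simp only [hL, e12_00, e12_10, e12_11, mul_zero, add_zero]
    rw [hu10, div_mul_cancel₀ _ (mul_ne_zero (mul_ne_zero heη' hc) hs')]
    ring
  -- the quadratic identity
  have main : ∑ n, L (F n) * star (L (F n)) = 0 := by
    have expand : ∀ K : Matrix (Fin 2) (Fin 2) ℂ, L K * star (L K) =
        K 0 0 * star (K 0 0) + star u10 * (K 0 0 * star (K 1 0)) + star u11 * (K 0 0 * star (K 1 1))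
        + u10 * (K 1 0 * star (K 0 0)) + u10 * star u10 * (K 1 0 * star (K 1 0))
        + u10 * star u11 * (K 1 0 * star (K 1 1))
        + u11 * (K 1 1 * star (K 0 0)) + u11 * star u10 * (K 1 1 * star (K 1 0))
        + u11 * star u11 * (K 1 1 * star (K 1 1)) := by
      intro K
      simp only [hL, star_add, star_mul']
      ring
    calc ∑ n, L (F n) * star (L (F n))
        = (∑ n, F n 0 0 * star (F n 0 0)) + star u10 * ∑ n, F n 0 0 * star (F n 1 0)
          + star u11 * ∑ n, F n 0 0 * star (F n 1 1)
          + u10 * ∑ n, F n 1 0 * star (F n 0 0)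
          + u10 * star u10 * ∑ n, F n 1 0 * star (F n 1 0)
          + u10 * star u11 * ∑ n, F n 1 0 * star (F n 1 1)
          + u11 * ∑ n, F n 1 1 * star (F n 0 0)
          + u11 * star u10 * ∑ n, F n 1 1 * star (F n 1 0)
          + u11 * star u11 * ∑ n, F n 1 1 * star (F n 1 1) := by
          simp only [expand, Finset.sum_add_distrib, Finset.mul_sum]
      _ = L (E11 θ φ ξ η) * star (L (E11 θ φ ξ η)) + L (E12 θ φ ξ η) * star (L (E12 θ φ ξ η)) := by
          rw [key 0 0 0 0, key 0 0 0 1, key 0 1 0 1, key 0 0 1 0, key 0 0 1 1,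
            key 0 1 1 1, key 1 0 1 0, key 1 0 1 1, key 1 1 1 1,
            expand (E11 θ φ ξ η), expand (E12 θ φ ξ η)]
          ring
      _ = 0 := by rw [hE1, hE2]; ring
  -- each summand is a nonnegative real, so every term vanishes
  have main' : ∑ n, Complex.normSq (L (F n)) = 0 := by
    have : ((∑ n, Complex.normSq (L (F n)) : ℝ) : ℂ) = 0 := by
      push_cast
      rw [← main]
      exact Finset.sum_congr rfl fun n _ => (Complex.mul_conj (L (F n))).symm
    exact_mod_cast this
  have hzero : Complex.normSq (L (F n0)) = 0 :=
    (Finset.sum_eq_zero_iff_of_nonneg fun n _ => Complex.normSq_nonneg _).1 main' n0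
      (Finset.mem_univ _)
  have hLz : L (F n0) = 0 := Complex.normSq_eq_zero.1 hzero
  -- but `L (F n0) = F n0 0 0 ≠ 0`, contradiction
  apply ha
  have : L (F n0) = F n0 0 0 := by
    simp only [hL, hc0, hd0, mul_zero, add_zero]
  rw [← this, hLz]
end
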